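/- arXiv:2510.26587 — 9 statements merged into one kernel-verified Lean document; each statement's English description precedes it below -/
import Mathlib

section
/- The minimum over all matrix-vector decompositions of a tensor T of the rank of the decomposition equals the tensor rank of T. -/
open Matrix BigOperators Polynomial

variable {K : Type*} [Field K]

/-- Tensor rank: smallest `r` such that `T` is a sum of `r` rank-one tensors. -/
noncomputable def tensorRank {m n p : ℕ} (T : Fin m → Fin n → Fin p → K) : ℕ :=
  sInf {r | ∃ (u : Fin r → Fin m → K) (v : Fin r → Fin n → K) (w : Fin r → Fin p → K),
    T = fun a b c => ∑ i, u i a * v i b * w i c}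

/-- Matrix-vector decomposition: `T = ∑ M ℓ ⊗ w ℓ` with nonzero matrices,
nonzero and pairwise non-collinear vectors. -/
def IsMVDecomp {m n p q : ℕ} (T : Fin m → Fin n → Fin p → K)
    (M : Fin q → Matrix (Fin m) (Fin n) K) (w : Fin q → Fin p → K) : Prop :=
  (∀ ℓ, M ℓ ≠ 0) ∧ (∀ ℓ, w ℓ ≠ 0) ∧
  (∀ ℓ ℓ' : Fin q, ℓ ≠ ℓ' → ∀ c : K, w ℓ' ≠ c • w ℓ) ∧
  T = fun a b c => ∑ ℓ, M ℓ a b * w ℓ c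

/-- Column space of a matrix. -/
noncomputable def colSpace {m n : ℕ} (M : Matrix (Fin m) (Fin n) K) :
    Submodule K (Fin m → K) := LinearMap.range M.mulVecLin

/-- A finite family of subspaces is in direct sum. -/
def DirectSumFamily {q : ℕ} {W : Type*} [AddCommGroup W] [Module K W]
    (E : Fin q → Submodule K W) : Prop :=
  ∀ x : Fin q → W, (∀ ℓ, x ℓ ∈ E ℓ) → (∑ ℓ, x ℓ) = 0 → ∀ ℓ, x ℓ = 0

/-- The 3-slices of an order-3 tensor. -/
def slice3 {m n p : ℕ} (T : Fin m → Fin n → Fin p → K) (k : Fin p) :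
    Matrix (Fin m) (Fin n) K := fun i j => T i j k

/-! A matrix of rank `r` is a sum of `r` rank-one matrices, so a matrix-vector decomposition of
rank `s` expands into `s` rank-one tensors. Conversely, `∑ uᵢ ⊗ vᵢ ⊗ wᵢ` is the matrix-vector sum
`∑ (uᵢ vᵢᵀ) ⊗ wᵢ` of total rank at most `r`. Deleting terms with a zero matrix or vector, and
merging terms with collinear vectors via `M ⊗ w + M' ⊗ (c • w) = (M + c • M') ⊗ w`, turns any
matrix-vector sum into a matrix-vector decomposition; by subadditivity of rank neither step
increases the total rank. -/

namespace Matrix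

variable {m n : Type*} [Fintype n]

theorem rank_add_le (A B : Matrix m n K) : (A + B).rank ≤ A.rank + B.rank := by
  have hrange : LinearMap.range (A + B).mulVecLin ≤
      LinearMap.range A.mulVecLin ⊔ LinearMap.range B.mulVecLin := by
    rintro _ ⟨x, rfl⟩
    simpa only [mulVecLin_add, LinearMap.add_apply] using Submodule.add_mem_sup
      (LinearMap.mem_range_self A.mulVecLin x) (LinearMap.mem_range_self B.mulVecLin x)
  exact (Submodule.finrank_mono hrange).trans (Submodule.finrank_add_le_finrank_add_finrank _ _)

theorem rank_smul_le (c : K) (A : Matrix m n K) : (c • A).rank ≤ A.rank := by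
  classical
  simpa [Matrix.mul_smul] using rank_mul_le_left A (c • (1 : Matrix n n K))

theorem exists_eq_sum_vecMulVec (A : Matrix m n K) :
    ∃ (u : Fin A.rank → m → K) (v : Fin A.rank → n → K), A = ∑ i, vecMulVec (u i) (v i) := by
  classical
  let b := Module.finBasis K (LinearMap.range A.mulVecLin)
  have hcol (j : n) : A.col j ∈ LinearMap.range A.mulVecLin :=
    ⟨Pi.single j 1, mulVec_single_one A j⟩
  refine ⟨fun i => b i, fun i j => b.repr ⟨A.col j, hcol j⟩ i, ?_⟩
  ext a j
  have hexp := congrArg (fun x : LinearMap.range A.mulVecLin => (x : m → K) a)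
    (b.sum_repr ⟨A.col j, hcol j⟩)
  simp only [Submodule.coe_sum, Submodule.coe_smul, Finset.sum_apply, Pi.smul_apply,
    smul_eq_mul] at hexp
  rw [sum_apply, ← col_apply A j a, ← hexp]
  exact Finset.sum_congr rfl fun i _ => mul_comm _ _

end Matrix

theorem Nat.sInf_eq_sInf_of_forall_exists_le {A B : Set ℕ} (hAB : ∀ a ∈ A, ∃ b ∈ B, b ≤ a)
    (hBA : ∀ b ∈ B, ∃ a ∈ A, a ≤ b) : sInf A = sInf B := by
  have sInf_le_sInf {A B : Set ℕ} (hB : B.Nonempty) (h : ∀ b ∈ B, ∃ a ∈ A, a ≤ b) :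
      sInf A ≤ sInf B :=
    let ⟨_, ha, hle⟩ := h _ (Nat.sInf_mem hB)
    (Nat.sInf_le ha).trans hle
  rcases B.eq_empty_or_nonempty with rfl | hB
  · have hA : A = ∅ := Set.eq_empty_of_forall_notMem fun a ha => by
      obtain ⟨b, hb, -⟩ := hAB a ha
      exact hb
    rw [hA]
  · obtain ⟨a, ha, -⟩ := hBA _ hB.some_mem
    exact le_antisymm (sInf_le_sInf hB hBA) (sInf_le_sInf ⟨a, ha⟩ hAB)

section MatrixVectorSum

variable {m n p q : ℕ}

def mvSum (M : Fin q → Matrix (Fin m) (Fin n) K) (w : Fin q → Fin p → K) :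
    Fin m → Fin n → Fin p → K :=
  fun a b c => ∑ ℓ, M ℓ a b * w ℓ c

theorem exists_rankOne_eq_mvSum (M : Fin q → Matrix (Fin m) (Fin n) K) (w : Fin q → Fin p → K) :
    ∃ (u : Fin (∑ ℓ, (M ℓ).rank) → Fin m → K) (v : Fin (∑ ℓ, (M ℓ).rank) → Fin n → K)
      (w' : Fin (∑ ℓ, (M ℓ).rank) → Fin p → K),
      mvSum M w = fun a b c => ∑ i, u i a * v i b * w' i c := by
  choose u v huv using fun ℓ => (M ℓ).exists_eq_sum_vecMulVec
  obtain ⟨e⟩ : Nonempty ((Σ ℓ, Fin (M ℓ).rank) ≃ Fin (∑ ℓ, (M ℓ).rank)) := ⟨finSigmaFinEquiv⟩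
  refine ⟨fun i => u (e.symm i).1 (e.symm i).2, fun i => v (e.symm i).1 (e.symm i).2,
    fun i => w (e.symm i).1, ?_⟩
  funext a b c
  calc mvSum M w a b c = ∑ σ : Σ ℓ, Fin (M ℓ).rank, u σ.1 σ.2 a * v σ.1 σ.2 b * w σ.1 c := by
        simp only [mvSum, Fintype.sum_sigma, huv, Matrix.sum_apply, Finset.sum_mul]
        rfl
    _ = _ := (e.symm.sum_comp fun σ => u σ.1 σ.2 a * v σ.1 σ.2 b * w σ.1 c).symm

theorem mvSum_comp_succAbove (M : Fin (q + 1) → Matrix (Fin m) (Fin n) K)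
    (w : Fin (q + 1) → Fin p → K) {ℓ : Fin (q + 1)} (h : M ℓ = 0 ∨ w ℓ = 0) :
    mvSum (M ∘ ℓ.succAbove) (w ∘ ℓ.succAbove) = mvSum M w := by
  funext a b c
  rw [mvSum, mvSum, Fin.sum_univ_succAbove _ ℓ]
  rcases h with h | h <;> simp [h]

theorem sum_rank_comp_succAbove_le (M : Fin (q + 1) → Matrix (Fin m) (Fin n) K)
    (ℓ : Fin (q + 1)) : ∑ j, (M (ℓ.succAbove j)).rank ≤ ∑ i, (M i).rank := by
  rw [Fin.sum_univ_succAbove _ ℓ]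
  exact Nat.le_add_left _ _

/-- Deletes term `ℓ` and adds `c • M ℓ` to the term that was at `ℓ.succAbove z`. -/
def mergeTerm (M : Fin (q + 1) → Matrix (Fin m) (Fin n) K) (ℓ : Fin (q + 1)) (z : Fin q) (c : K) :
    Fin q → Matrix (Fin m) (Fin n) K :=
  fun j => M (ℓ.succAbove j) + (if j = z then c else 0) • M ℓ

theorem mvSum_mergeTerm (M : Fin (q + 1) → Matrix (Fin m) (Fin n) K)
    (w : Fin (q + 1) → Fin p → K) {ℓ : Fin (q + 1)} {z : Fin q} {c : K}
    (hw : w ℓ = c • w (ℓ.succAbove z)) :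
    mvSum (mergeTerm M ℓ z c) (w ∘ ℓ.succAbove) = mvSum M w := by
  funext a b c'
  simp only [mvSum, mergeTerm, Fin.sum_univ_succAbove _ ℓ, Function.comp_apply,
    Matrix.add_apply, Matrix.smul_apply, smul_eq_mul, add_mul, ite_mul, zero_mul,
    Finset.sum_add_distrib, Finset.sum_ite_eq', Finset.mem_univ, if_true, hw, Pi.smul_apply]
  ring

theorem sum_rank_mergeTerm_le (M : Fin (q + 1) → Matrix (Fin m) (Fin n) K) (ℓ : Fin (q + 1))
    (z : Fin q) (c : K) : ∑ j, (mergeTerm M ℓ z c j).rank ≤ ∑ i, (M i).rank := by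
  calc ∑ j, (mergeTerm M ℓ z c j).rank
      ≤ ∑ j, ((M (ℓ.succAbove j)).rank + ((if j = z then c else 0) • M ℓ).rank) :=
        Finset.sum_le_sum fun j _ => rank_add_le _ _
    _ = ∑ j, (M (ℓ.succAbove j)).rank + (c • M ℓ).rank := by
        rw [Finset.sum_add_distrib]
        congr 1
        rw [Finset.sum_eq_single z (fun j _ hj => by simp [hj]) (by simp), if_pos rfl]
    _ ≤ ∑ j, (M (ℓ.succAbove j)).rank + (M ℓ).rank := by
        gcongr
        exact rank_smul_le c (M ℓ)
    _ = ∑ i, (M i).rank := by rw [Fin.sum_univ_succAbove _ ℓ, add_comm]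

theorem exists_isMVDecomp_mvSum : ∀ {q : ℕ} (M : Fin q → Matrix (Fin m) (Fin n) K)
    (w : Fin q → Fin p → K), ∃ (q' : ℕ) (M' : Fin q' → Matrix (Fin m) (Fin n) K)
      (w' : Fin q' → Fin p → K),
      IsMVDecomp (mvSum M w) M' w' ∧ ∑ ℓ, (M' ℓ).rank ≤ ∑ ℓ, (M ℓ).rank
  | 0, M, w => ⟨0, M, w, ⟨finZeroElim, finZeroElim, finZeroElim, rfl⟩, le_rfl⟩
  | q + 1, M, w => by
    by_cases hzero : ∃ ℓ, M ℓ = 0 ∨ w ℓ = 0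
    · obtain ⟨ℓ, hℓ⟩ := hzero
      obtain ⟨q', M', w', hdec, hrank⟩ :=
        exists_isMVDecomp_mvSum (M ∘ ℓ.succAbove) (w ∘ ℓ.succAbove)
      rw [mvSum_comp_succAbove M w hℓ] at hdec
      exact ⟨q', M', w', hdec, hrank.trans (sum_rank_comp_succAbove_le M ℓ)⟩
    by_cases hcollinear : ∃ ℓ ℓ' : Fin (q + 1), ℓ ≠ ℓ' ∧ ∃ c : K, w ℓ' = c • w ℓ
    · obtain ⟨ℓ, ℓ', hne, c, hc⟩ := hcollinear
      obtain ⟨z, rfl⟩ := Fin.exists_succAbove_eq hne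
      obtain ⟨q', M', w', hdec, hrank⟩ :=
        exists_isMVDecomp_mvSum (mergeTerm M ℓ' z c) (w ∘ ℓ'.succAbove)
      rw [mvSum_mergeTerm M w hc] at hdec
      exact ⟨q', M', w', hdec, hrank.trans (sum_rank_mergeTerm_le M ℓ' z c)⟩
    push Not at hzero hcollinear
    exact ⟨q + 1, M, w, ⟨fun ℓ => (hzero ℓ).1, fun ℓ => (hzero ℓ).2, hcollinear, rfl⟩, le_rfl⟩

end MatrixVectorSum

theorem mvRank_min_eq_tensorRank {m n p : ℕ} (T : Fin m → Fin n → Fin p → K) :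
    sInf {s | ∃ (q : ℕ) (M : Fin q → Matrix (Fin m) (Fin n) K) (w : Fin q → Fin p → K),
      IsMVDecomp T M w ∧ (∑ ℓ, (M ℓ).rank) = s} = tensorRank T := by
  refine Nat.sInf_eq_sInf_of_forall_exists_le ?_ ?_
  · rintro _ ⟨q, M, w, ⟨-, -, -, rfl⟩, rfl⟩
    exact ⟨_, exists_rankOne_eq_mvSum M w, le_rfl⟩
  · rintro r ⟨u, v, w, rfl⟩
    obtain ⟨q, M, w', hdec, hrank⟩ := exists_isMVDecomp_mvSum (fun i => vecMulVec (u i) (v i)) w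
    refine ⟨_, ⟨q, M, w', hdec, rfl⟩, hrank.trans ?_⟩
    calc ∑ i, (vecMulVec (u i) (v i)).rank ≤ ∑ _i : Fin r, 1 :=
          Finset.sum_le_sum fun i _ => rank_vecMulVec_le (u i) (v i)
      _ = r := by simp
end

section
/- Suppose a tensor T of rank r admits a unique decomposition T = Σ_{ℓ=1}^r (u_ℓ ⊗ v_ℓ) ⊗ w_ℓ as a sum of r rank-one tensors (unique up to permutation and scaling of factors). Then no two vectors w_ℓ in this decomposition are collinear, and this decomposition is also the unique matrix-vector decomposition of T of rank r. -/
open Matrix BigOperators Polynomial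

variable {K : Type*} [Field K]

/-!
Minimality (`tensorRank T = r`) rules out zero terms and pairs of terms whose sum is rank one.
If `w ℓ' = c • w ℓ`, the matrix `u ℓ ⊗ v ℓ + c • u ℓ' ⊗ v ℓ'` has the second splitting
`(u ℓ + u ℓ') ⊗ v ℓ + u ℓ' ⊗ (c • v ℓ' - v ℓ)`; uniqueness forces `u ℓ ∥ u ℓ'`, and then the two
terms merge into one, against minimality.

Given a matrix-vector decomposition `∑ M ℓ ⊗ γ ℓ` with `∑ rank (M ℓ) = r`, a rank factorization
of each `M ℓ` refines it into `r` rank-one terms, which by uniqueness are the terms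
`u ⊗ v ⊗ w`. Two of them coming from the same `M ℓ` would have collinear third factors, so every
`M ℓ` has rank one.
-/

open Finset Function

namespace Matrix

theorem exists_rank_factorization {m n : Type*} [Fintype n] (M : Matrix m n K) :
    ∃ (A : Matrix m (Fin M.rank) K) (B : Matrix (Fin M.rank) n K), A * B = M := by
  classical
  let V := LinearMap.range M.mulVecLin
  let b : Module.Basis (Fin M.rank) K V := Module.finBasisOfFinrankEq K V rfl
  have hcol (j : n) : M.col j ∈ V := ⟨Pi.single j 1, M.mulVec_single_one j⟩
  refine ⟨Matrix.of fun a i => (b i : m → K) a, Matrix.of fun i j => b.repr ⟨_, hcol j⟩ i, ?_⟩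
  ext a j
  have h := congr_arg (fun x : V => (x : m → K) a) (b.sum_repr ⟨_, hcol j⟩)
  simp only [Submodule.coe_sum, Submodule.coe_smul, Finset.sum_apply, Pi.smul_apply,
    smul_eq_mul, col_apply] at h
  rw [← h, mul_apply]
  exact Finset.sum_congr rfl fun i _ => mul_comm _ _

theorem rank_pos_of_ne_zero {m n : Type*} [Fintype n] {M : Matrix m n K} (hM : M ≠ 0) :
    0 < M.rank := by
  obtain ⟨A, B, hAB⟩ := M.exists_rank_factorization
  refine Nat.pos_of_ne_zero fun h0 => hM ?_
  have : IsEmpty (Fin M.rank) := by rw [h0]; infer_instance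
  rw [← hAB]
  ext a j
  simp [mul_apply]

theorem vecMulVec_ne_zero' {R m n : Type*} [MulZeroClass R] [NoZeroDivisors R] {x : m → R}
    {y : n → R} (hx : x ≠ 0) (hy : y ≠ 0) :
    vecMulVec x y ≠ 0 := fun h => by
  obtain ⟨a, ha⟩ := Function.ne_iff.mp hx
  obtain ⟨b, hb⟩ := Function.ne_iff.mp hy
  exact mul_ne_zero ha hb congr($h a b)

theorem rank_vecMulVec_of_ne_zero {m n : Type*} [Fintype n] {x : m → K} {y : n → K}
    (hx : x ≠ 0) (hy : y ≠ 0) : (vecMulVec x y).rank = 1 :=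
  le_antisymm (rank_vecMulVec_le x y) (rank_pos_of_ne_zero (vecMulVec_ne_zero' hx hy))

end Matrix

theorem Fintype.sum_eq_add_add_sum_compl_pair {ι M : Type*} [Fintype ι] [DecidableEq ι]
    [AddCommMonoid M] (f : ι → M) {i j : ι} (hij : i ≠ j) :
    ∑ k, f k = f i + f j + ∑ k ∈ {i, j}ᶜ, f k := by
  rw [← sum_add_sum_compl {i, j} f, sum_pair hij]

theorem eq_or_eq_of_comp_perm_of_eqOn_compl_pair {ι β : Type*} [Fintype ι] [DecidableEq ι]
    {f g : ι → β} (π : Equiv.Perm ι) (hπ : ∀ k, f k = g (π k)) {i j : ι} (hij : i ≠ j)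
    (hfg : ∀ k ∈ ({i, j} : Finset ι)ᶜ, f k = g k) : f i = g i ∨ f i = g j := by
  have hsum : ∑ k, ({f k} : Multiset β) = ∑ k, {g k} := by
    simp_rw [hπ]
    exact Equiv.sum_comp π fun k => {g k}
  rw [Fintype.sum_eq_add_add_sum_compl_pair _ hij, Fintype.sum_eq_add_add_sum_compl_pair _ hij,
    sum_congr rfl fun k hk => by rw [hfg k hk]] at hsum
  have hmem : f i ∈ ({g i} + {g j} : Multiset β) := by
    rw [← add_right_cancel hsum]
    simp
  simpa using hmem

section Outer

variable {R α β γ : Type*}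

def outer3 [Mul R] (x : α → R) (y : β → R) (z : γ → R) : α → β → γ → R :=
  fun a b c => x a * y b * z c

theorem sum_outer3 [Semiring R] {ι : Type*} (s : Finset ι) (x : ι → α → R) (y : ι → β → R)
    (z : ι → γ → R) :
    ∑ i ∈ s, outer3 (x i) (y i) (z i) = fun a b c => ∑ i ∈ s, x i a * y i b * z i c := by
  ext a b c
  simp only [Finset.sum_apply, outer3]

theorem outer3_add_left [Semiring R] (x x' : α → R) (y : β → R) (z : γ → R) :
    outer3 (x + x') y z = outer3 x y z + outer3 x' y z := by
  ext a b c
  simp only [outer3, Pi.add_apply, add_mul]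

theorem outer3_eq_zero_iff [MulZeroClass R] [NoZeroDivisors R] {x : α → R} {y : β → R}
    {z : γ → R} :
    outer3 x y z = 0 ↔ x = 0 ∨ y = 0 ∨ z = 0 := by
  constructor
  · intro h
    by_contra! hne
    obtain ⟨a, ha⟩ := Function.ne_iff.mp hne.1
    obtain ⟨b, hb⟩ := Function.ne_iff.mp hne.2.1
    obtain ⟨c, hc⟩ := Function.ne_iff.mp hne.2.2
    exact mul_ne_zero (mul_ne_zero ha hb) hc congr($h a b c)
  · rintro (rfl | rfl | rfl) <;> ext <;> simp [outer3]

theorem exists_smul_eq_left_of_outer3_eq {x x' : α → K} {y y' : β → K} {z z' : γ → K}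
    (h : outer3 x y z = outer3 x' y' z') (hy : y ≠ 0) (hz : z ≠ 0) :
    ∃ d : K, x = d • x' := by
  obtain ⟨b, hb⟩ := Function.ne_iff.mp hy
  obtain ⟨c, hc⟩ := Function.ne_iff.mp hz
  refine ⟨y' b * z' c / (y b * z c), funext fun a => ?_⟩
  have hbc : y b * z c ≠ 0 := mul_ne_zero hb hc
  have := congr($h a b c)
  simp only [outer3] at this
  rw [Pi.smul_apply, smul_eq_mul, div_mul_eq_mul_div, eq_div_iff hbc]
  linear_combination this

theorem exists_smul_eq_right_of_outer3_eq {x x' : α → K} {y y' : β → K} {z z' : γ → K}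
    (h : outer3 x y z = outer3 x' y' z') (hx : x ≠ 0) (hy : y ≠ 0) :
    ∃ d : K, z = d • z' := by
  obtain ⟨a, ha⟩ := Function.ne_iff.mp hx
  obtain ⟨b, hb⟩ := Function.ne_iff.mp hy
  refine ⟨x' a * y' b / (x a * y b), funext fun c => ?_⟩
  have hab : x a * y b ≠ 0 := mul_ne_zero ha hb
  have := congr($h a b c)
  simp only [outer3] at this
  rw [Pi.smul_apply, smul_eq_mul, div_mul_eq_mul_div, eq_div_iff hab]
  linear_combination this

end Outer

theorem tensorRank_le_card {m n p : ℕ} {T : Fin m → Fin n → Fin p → K} {ι : Type*}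
    (s : Finset ι) (t : ι → Fin m → Fin n → Fin p → K)
    (ht : ∀ i, ∃ x y z, t i = outer3 x y z) (hT : T = ∑ i ∈ s, t i) :
    tensorRank T ≤ s.card := by
  choose x y z hxyz using ht
  let e := s.equivFin.symm
  refine Nat.sInf_le ⟨fun k => x (e k), fun k => y (e k), fun k => z (e k), ?_⟩
  rw [← sum_outer3, hT, ← sum_coe_sort, ← e.sum_comp]
  simp only [hxyz]

theorem tensorRank_lt_of_eq_sum_erase {m n p r : ℕ} {T : Fin m → Fin n → Fin p → K}
    (t : Fin r → Fin m → Fin n → Fin p → K) (ht : ∀ i, ∃ x y z, t i = outer3 x y z)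
    (j : Fin r) (hT : T = ∑ i ∈ univ.erase j, t i) : tensorRank T < r := by
  have := tensorRank_le_card _ t ht hT
  rw [card_erase_of_mem (mem_univ j), card_univ, Fintype.card_fin] at this
  have := j.pos
  omega

def IsUniqueRankOneDecomp {m n p r : ℕ} (T : Fin m → Fin n → Fin p → K)
    (u : Fin r → Fin m → K) (v : Fin r → Fin n → K) (w : Fin r → Fin p → K) : Prop :=
  ∀ (u' : Fin r → Fin m → K) (v' : Fin r → Fin n → K) (w' : Fin r → Fin p → K),
    T = ∑ i, outer3 (u' i) (v' i) (w' i) →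
    ∃ π : Equiv.Perm (Fin r), ∀ ℓ,
      outer3 (u' ℓ) (v' ℓ) (w' ℓ) = outer3 (u (π ℓ)) (v (π ℓ)) (w (π ℓ))

section RankOneDecomp

variable {m n p r : ℕ} {T : Fin m → Fin n → Fin p → K}
  {u : Fin r → Fin m → K} {v : Fin r → Fin n → K} {w : Fin r → Fin p → K}

theorem factors_ne_zero_of_tensorRank_eq (hT : T = ∑ i, outer3 (u i) (v i) (w i))
    (hrank : tensorRank T = r) (j : Fin r) : u j ≠ 0 ∧ v j ≠ 0 ∧ w j ≠ 0 := by
  have hj : outer3 (u j) (v j) (w j) ≠ 0 := fun hj =>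
    (tensorRank_lt_of_eq_sum_erase (fun i => outer3 (u i) (v i) (w i)) (fun i => ⟨_, _, _, rfl⟩) j
      (by rw [hT, sum_erase (f := fun i => outer3 (u i) (v i) (w i)) _ hj])).ne hrank
  simpa only [ne_eq, outer3_eq_zero_iff, not_or] using hj

theorem add_outer3_ne_outer3_of_tensorRank_eq (hT : T = ∑ i, outer3 (u i) (v i) (w i))
    (hrank : tensorRank T = r) {ℓ ℓ' : Fin r} (hne : ℓ ≠ ℓ') (x : Fin m → K) (y : Fin n → K)
    (z : Fin p → K) :
    outer3 (u ℓ) (v ℓ) (w ℓ) + outer3 (u ℓ') (v ℓ') (w ℓ') ≠ outer3 x y z := by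
  intro h
  let t := fun i => outer3 (u i) (v i) (w i)
  have hmerged : T = ∑ i ∈ univ.erase ℓ', update t ℓ (outer3 x y z) i := by
    rw [sum_update_of_mem (mem_erase.2 ⟨hne, mem_univ ℓ⟩), hT,
      Fintype.sum_eq_add_add_sum_compl_pair _ hne, ← h]
    congr 2
    ext k
    simp only [mem_compl, mem_insert, mem_singleton, mem_sdiff, mem_erase, mem_univ]
    tauto
  refine (tensorRank_lt_of_eq_sum_erase _ (fun i => ?_) ℓ' hmerged).ne hrank
  rcases eq_or_ne i ℓ with rfl | hi
  · exact ⟨x, y, z, update_self ..⟩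
  · exact ⟨u i, v i, w i, update_of_ne hi ..⟩

theorem IsUniqueRankOneDecomp.not_collinear (hT : T = ∑ i, outer3 (u i) (v i) (w i))
    (hrank : tensorRank T = r) (huniq : IsUniqueRankOneDecomp T u v w) {ℓ ℓ' : Fin r}
    (hne : ℓ ≠ ℓ') (c : K) : w ℓ' ≠ c • w ℓ := by
  intro hw
  have hnz := factors_ne_zero_of_tensorRank_eq hT hrank
  let u' := update u ℓ (u ℓ + u ℓ')
  let v' := update v ℓ' (c • v ℓ' - v ℓ)
  let w' := update w ℓ' (w ℓ)
  have hrest : ∀ k ∈ ({ℓ, ℓ'} : Finset (Fin r))ᶜ,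
      outer3 (u' k) (v' k) (w' k) = outer3 (u k) (v k) (w k) := by
    intro k hk
    simp only [mem_compl, mem_insert, mem_singleton, not_or] at hk
    simp only [u', v', w', update_of_ne hk.1, update_of_ne hk.2]
  have hℓ : outer3 (u' ℓ) (v' ℓ) (w' ℓ) = outer3 (u ℓ + u ℓ') (v ℓ) (w ℓ) := by
    simp only [u', v', w', update_self, update_of_ne hne]
  have hℓ' : outer3 (u' ℓ') (v' ℓ') (w' ℓ') = outer3 (u ℓ') (c • v ℓ' - v ℓ) (w ℓ) := by
    simp only [u', v', w', update_self, update_of_ne hne.symm]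
  have hT' : T = ∑ i, outer3 (u' i) (v' i) (w' i) := by
    rw [hT, Fintype.sum_eq_add_add_sum_compl_pair _ hne,
      Fintype.sum_eq_add_add_sum_compl_pair _ hne, hℓ, hℓ', sum_congr rfl hrest, hw]
    congr 1
    ext a b c'
    simp only [outer3, Pi.add_apply, Pi.smul_apply, Pi.sub_apply, smul_eq_mul]
    ring
  obtain ⟨π, hπ⟩ := huniq u' v' w' hT'
  rcases eq_or_eq_of_comp_perm_of_eqOn_compl_pair π hπ hne hrest with h | h <;> rw [hℓ] at h
  · rw [outer3_add_left, add_eq_left, outer3_eq_zero_iff] at h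
    rcases h with h | h | h
    exacts [(hnz ℓ').1 h, (hnz ℓ).2.1 h, (hnz ℓ).2.2 h]
  · obtain ⟨d, hd⟩ := exists_smul_eq_left_of_outer3_eq h (hnz ℓ).2.1 (hnz ℓ).2.2
    refine add_outer3_ne_outer3_of_tensorRank_eq hT hrank hne (u ℓ') ((d - 1) • v ℓ + c • v ℓ')
      (w ℓ) ?_
    rw [hw, eq_sub_of_add_eq hd]
    ext a b c'
    simp only [outer3, Pi.add_apply, Pi.smul_apply, Pi.sub_apply, smul_eq_mul]
    ring

theorem IsUniqueRankOneDecomp.exists_equiv (huniq : IsUniqueRankOneDecomp T u v w)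
    {S : Type*} [Fintype S] (e : S ≃ Fin r) (x : S → Fin m → K) (y : S → Fin n → K)
    (z : S → Fin p → K) (hT : T = ∑ s, outer3 (x s) (y s) (z s)) :
    ∃ σ : S ≃ Fin r, ∀ s, outer3 (x s) (y s) (z s) = outer3 (u (σ s)) (v (σ s)) (w (σ s)) := by
  obtain ⟨π, hπ⟩ := huniq (x ∘ e.symm) (y ∘ e.symm) (z ∘ e.symm)
    (by rw [hT]; exact (e.symm.sum_comp fun s => outer3 (x s) (y s) (z s)).symm)
  exact ⟨e.trans π, fun s => by simpa using hπ (e s)⟩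

theorem IsUniqueRankOneDecomp.exists_equiv_of_isMVDecomp (huniq : IsUniqueRankOneDecomp T u v w)
    (hnz : ∀ j, u j ≠ 0 ∧ v j ≠ 0 ∧ w j ≠ 0)
    (hnc : ∀ ℓ ℓ' : Fin r, ℓ ≠ ℓ' → ∀ c : K, w ℓ' ≠ c • w ℓ)
    {q : ℕ} {M : Fin q → Matrix (Fin m) (Fin n) K} {γ : Fin q → Fin p → K}
    (hMV : IsMVDecomp T M γ) (hsum : ∑ ℓ, (M ℓ).rank = r) :
    ∃ π : Fin q ≃ Fin r, ∀ ℓ,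
      (fun a b c => M ℓ a b * γ ℓ c) =
      (fun a b c => vecMulVec (u (π ℓ)) (v (π ℓ)) a b * w (π ℓ) c) := by
  obtain ⟨hM0, -, -, hTM⟩ := hMV
  choose A B hAB using fun ℓ => (M ℓ).exists_rank_factorization
  let S := Σ ℓ, Fin (M ℓ).rank
  have hT : T = ∑ s : S, outer3 (fun a => A s.1 a s.2) (B s.1 s.2) (γ s.1) := by
    rw [hTM, sum_outer3]
    ext a b c
    simp only [← hAB, mul_apply, sum_mul]
    exact (Fintype.sum_sigma fun s : S => A s.1 a s.2 * B s.1 s.2 b * γ s.1 c).symm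
  obtain ⟨σ, hσ⟩ := huniq.exists_equiv
    (Fintype.equivFinOfCardEq (by simp [S, hsum])) _ _ _ hT
  have hγ (ℓ : Fin q) (i : Fin (M ℓ).rank) : ∃ d : K, w (σ ⟨ℓ, i⟩) = d • γ ℓ :=
    exists_smul_eq_right_of_outer3_eq (hσ ⟨ℓ, i⟩).symm (hnz _).1 (hnz _).2.1
  have hrank (ℓ : Fin q) : (M ℓ).rank = 1 := by
    have hpos := rank_pos_of_ne_zero (hM0 ℓ)
    by_contra h1
    let s₀ : S := ⟨ℓ, ⟨0, hpos⟩⟩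
    let s₁ : S := ⟨ℓ, ⟨1, by omega⟩⟩
    have hσne : σ s₀ ≠ σ s₁ :=
      σ.injective.ne fun h => by simpa using congr_arg (fun s : S => (s.2 : ℕ)) h
    obtain ⟨d₀, h₀⟩ := hγ ℓ s₀.2
    obtain ⟨d₁, h₁⟩ := hγ ℓ s₁.2
    have hd₀ : d₀ ≠ 0 := by
      rintro rfl
      exact (hnz _).2.2 (by rw [h₀, zero_smul])
    refine hnc (σ s₀) (σ s₁) hσne (d₁ * d₀⁻¹) ?_
    rw [h₁, h₀, smul_smul, inv_mul_cancel_right₀ hd₀]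
  let f : Fin q ≃ S := (Equiv.sigmaUnique (Fin q) fun _ => Fin 1).symm.trans
    (Equiv.sigmaCongrRight fun ℓ => finCongr (hrank ℓ).symm)
  refine ⟨f.trans σ, fun ℓ => ?_⟩
  obtain ⟨i₀, hf⟩ : ∃ i₀, f ℓ = ⟨ℓ, i₀⟩ := ⟨_, rfl⟩
  have hM (a : Fin m) (b : Fin n) : M ℓ a b = A ℓ a i₀ * B ℓ i₀ b := by
    rw [← hAB, mul_apply]
    refine Fintype.sum_eq_single _ fun i hi => absurd (Fin.ext ?_) hi
    have := hrank ℓ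
    omega
  ext a b c
  simpa [hf, hM, outer3, vecMulVec_apply] using congr($(hσ ⟨ℓ, i₀⟩) a b c)

end RankOneDecomp

theorem unique_rank_one_decomp_gives_unique_mv {m n p r : ℕ}
    (T : Fin m → Fin n → Fin p → K)
    (u : Fin r → Fin m → K) (v : Fin r → Fin n → K) (w : Fin r → Fin p → K)
    (hT : T = fun a b c => ∑ i, u i a * v i b * w i c)
    (hrank : tensorRank T = r)
    (huniq : ∀ (u' : Fin r → Fin m → K) (v' : Fin r → Fin n → K) (w' : Fin r → Fin p → K),
      T = (fun a b c => ∑ i, u' i a * v' i b * w' i c) →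
      ∃ π : Equiv.Perm (Fin r), ∀ ℓ,
        (fun a b c => u' ℓ a * v' ℓ b * w' ℓ c) =
        (fun a b c => u (π ℓ) a * v (π ℓ) b * w (π ℓ) c)) :
    (∀ ℓ ℓ' : Fin r, ℓ ≠ ℓ' → ∀ c : K, w ℓ' ≠ c • w ℓ) ∧
    IsMVDecomp T (fun ℓ => vecMulVec (u ℓ) (v ℓ)) w ∧
    (∑ ℓ, (vecMulVec (u ℓ) (v ℓ)).rank) = r ∧
    (∀ (q : ℕ) (M : Fin q → Matrix (Fin m) (Fin n) K) (γ : Fin q → Fin p → K),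
      IsMVDecomp T M γ → (∑ ℓ, (M ℓ).rank) = r →
      ∃ π : Fin q ≃ Fin r, ∀ ℓ,
        (fun a b c => M ℓ a b * γ ℓ c) =
        (fun a b c => vecMulVec (u (π ℓ)) (v (π ℓ)) a b * w (π ℓ) c)) := by
  have hT' : T = ∑ i, outer3 (u i) (v i) (w i) := by rw [hT, sum_outer3]
  have huniq' : IsUniqueRankOneDecomp T u v w := fun u' v' w' h =>
    huniq u' v' w' (by rw [h, sum_outer3])
  have hnz := factors_ne_zero_of_tensorRank_eq hT' hrank
  have hnc : ∀ ℓ ℓ' : Fin r, ℓ ≠ ℓ' → ∀ c : K, w ℓ' ≠ c • w ℓ :=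
    fun _ _ hne => huniq'.not_collinear hT' hrank hne
  refine ⟨hnc, ⟨fun ℓ => vecMulVec_ne_zero' (hnz ℓ).1 (hnz ℓ).2.1, fun ℓ => (hnz ℓ).2.2, hnc, ?_⟩,
    ?_, fun q M γ hMV hsum => huniq'.exists_equiv_of_isMVDecomp hnz hnc hMV hsum⟩
  · simp only [hT, vecMulVec_apply]
  · simp [rank_vecMulVec_of_ne_zero (hnz _).1 (hnz _).2.1]
end

section
/- Let T = Σ_{i=1}^r uᵢ ⊗ vᵢ ⊗ wᵢ where the uᵢ are linearly independent, the vᵢ are linearly independent, each wᵢ is nonzero, and K is an infinite field. Then the linear span of the 3-slices of T contains a matrix of rank r; consequently rank(T) = r. -/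
/-!
For `c ∈ Kᵖ` the combination `∑ₖ cₖ Zₖ` equals `∑ᵢ ⟪wᵢ, c⟫ uᵢvᵢᵀ = Uᵀ diag(⟪wᵢ, c⟫) V`.
A vector space over an infinite field is not a finite union of proper subspaces, so some `c`
avoids all the hyperplanes `wᵢ^⊥`; then the diagonal factor is invertible and, `U` and `V`
having independent rows, the combination has rank `r`. Conversely the slices of any
decomposition into `r'` rank-one tensors lie in the span of `r'` rank-one matrices, so every
matrix in the span of the slices has rank at most `r'`; hence `rank T ≥ r`.
-/

open Matrix BigOperators Polynomial

variable {K : Type*} [Field K]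

theorem Module.Dual.exists_forall_apply_ne_zero {V ι : Type*} [Infinite K] [AddCommGroup V]
    [Module K V] [Finite ι] (f : ι → Module.Dual K V) (hf : ∀ i, f i ≠ 0) :
    ∃ x, ∀ i, f i x ≠ 0 := by
  by_contra! h
  have hcover : ⋃ i, ((LinearMap.ker (f i) : Subspace K V) : Set V) = Set.univ :=
    Set.eq_univ_of_forall fun x => Set.mem_iUnion.mpr (h x)
  obtain ⟨i, hi⟩ := Subspace.exists_eq_top_of_iUnion_eq_univ hcover
  exact hf i (LinearMap.ker_eq_top.mp hi)

theorem exists_forall_dotProduct_ne_zero {ι n : Type*} [Infinite K] [Finite ι] [Fintype n]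
    (w : ι → n → K) (hw : ∀ i, w i ≠ 0) : ∃ c : n → K, ∀ i, w i ⬝ᵥ c ≠ 0 := by
  classical
  exact Module.Dual.exists_forall_apply_ne_zero (fun i => dotProductEquiv K n (w i))
    fun i => (map_ne_zero_iff _ (dotProductEquiv K n).injective).mpr (hw i)

namespace Matrix

variable {ι m n : Type*} [Fintype ι]

theorem exists_mul_eq_one_of_linearIndependent_row [DecidableEq ι] [Fintype n]
    {B : Matrix ι n K} (hB : LinearIndependent K B.row) : ∃ C : Matrix n ι K, B * C = 1 := by
  refine mulVec_surjective_iff_exists_right_inverse.mp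
    (LinearMap.range_eq_top (f := B.mulVecLin) |>.mp (Submodule.eq_top_of_finrank_eq ?_))
  rw [Module.finrank_fintype_fun_eq_card, ← hB.rank_matrix]
  rfl

theorem rank_transpose_mul_of_linearIndependent_row [Fintype m] [Fintype n]
    {A : Matrix ι m K} {B : Matrix ι n K}
    (hA : LinearIndependent K A.row) (hB : LinearIndependent K B.row) :
    (Aᵀ * B).rank = Fintype.card ι := by
  classical
  obtain ⟨C, hC⟩ := exists_mul_eq_one_of_linearIndependent_row hB
  obtain ⟨D, hD⟩ := exists_mul_eq_one_of_linearIndependent_row hA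
  refine le_antisymm ((rank_mul_le_left _ _).trans (rank_le_card_width _)) ?_
  have hone : Dᵀ * (Aᵀ * B) * C = 1 := by
    rw [← Matrix.mul_assoc, ← transpose_mul, hD, transpose_one, Matrix.one_mul, hC]
  calc Fintype.card ι = (Dᵀ * (Aᵀ * B) * C).rank := by rw [hone, rank_one]
    _ ≤ (Dᵀ * (Aᵀ * B)).rank := rank_mul_le_left _ _
    _ ≤ (Aᵀ * B).rank := rank_mul_le_right _ _

theorem sum_vecMulVec_eq_transpose_mul (u : ι → m → K) (v : ι → n → K) :
    ∑ i, vecMulVec (u i) (v i) = (of u)ᵀ * of v := by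
  ext a b
  simp [mul_apply, vecMulVec_apply, sum_apply]

theorem rank_sum_vecMulVec_le [Fintype n] (u : ι → m → K) (v : ι → n → K) :
    (∑ i, vecMulVec (u i) (v i)).rank ≤ Fintype.card ι := by
  rw [sum_vecMulVec_eq_transpose_mul]
  exact (rank_mul_le_left _ _).trans (rank_le_card_width _)

theorem rank_sum_smul_vecMulVec [Fintype m] [Fintype n] {u : ι → m → K} {v : ι → n → K}
    (hu : LinearIndependent K u) (hv : LinearIndependent K v) {c : ι → K} (hc : ∀ i, c i ≠ 0) :
    (∑ i, c i • vecMulVec (u i) (v i)).rank = Fintype.card ι := by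
  simp_rw [← smul_vecMulVec]
  rw [sum_vecMulVec_eq_transpose_mul]
  exact rank_transpose_mul_of_linearIndependent_row
    (hu.units_smul fun i => Units.mk0 (c i) (hc i)) hv

theorem rank_le_of_mem_span_vecMulVec [Fintype n] {u : ι → m → K} {v : ι → n → K}
    {Z : Matrix m n K} (hZ : Z ∈ Submodule.span K (Set.range fun i => vecMulVec (u i) (v i))) :
    Z.rank ≤ Fintype.card ι := by
  obtain ⟨c, rfl⟩ := (Submodule.mem_span_range_iff_exists_fun K).mp hZ
  simp_rw [← smul_vecMulVec]
  exact rank_sum_vecMulVec_le _ v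

end Matrix

section Slices

variable {ι : Type*} [Fintype ι] {m n p : ℕ} {T : Fin m → Fin n → Fin p → K}
  {u : ι → Fin m → K} {v : ι → Fin n → K} {w : ι → Fin p → K}

theorem slice3_eq_sum_smul_vecMulVec (hT : T = fun a b c => ∑ i, u i a * v i b * w i c)
    (k : Fin p) : slice3 T k = ∑ i, w i k • vecMulVec (u i) (v i) := by
  subst hT
  ext a b
  simp only [slice3, Matrix.sum_apply, Matrix.smul_apply, vecMulVec_apply, smul_eq_mul]
  exact Finset.sum_congr rfl fun i _ => mul_comm _ _

theorem sum_smul_slice3_eq (hT : T = fun a b c => ∑ i, u i a * v i b * w i c) (c : Fin p → K) :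
    ∑ k, c k • slice3 T k = ∑ i, (w i ⬝ᵥ c) • vecMulVec (u i) (v i) := by
  simp_rw [slice3_eq_sum_smul_vecMulVec hT, Finset.smul_sum, smul_smul, dotProduct,
    Finset.sum_smul, mul_comm (c _)]
  exact Finset.sum_comm

theorem span_slice3_le_span_vecMulVec (hT : T = fun a b c => ∑ i, u i a * v i b * w i c) :
    Submodule.span K (Set.range (slice3 T)) ≤
      Submodule.span K (Set.range fun i => vecMulVec (u i) (v i)) := by
  refine Submodule.span_le.mpr <| Set.range_subset_iff.mpr fun k => ?_
  rw [slice3_eq_sum_smul_vecMulVec hT]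
  exact Submodule.sum_mem _ fun i _ => Submodule.smul_mem _ _ (Submodule.subset_span ⟨i, rfl⟩)

end Slices

section TensorRank

variable {m n p r : ℕ} {T : Fin m → Fin n → Fin p → K}
  {u : Fin r → Fin m → K} {v : Fin r → Fin n → K} {w : Fin r → Fin p → K}

theorem tensorRank_le (hT : T = fun a b c => ∑ i, u i a * v i b * w i c) : tensorRank T ≤ r :=
  Nat.sInf_le ⟨u, v, w, hT⟩

theorem rank_le_tensorRank_of_mem_span_slice3
    (hT : T = fun a b c => ∑ i, u i a * v i b * w i c) {Z : Matrix (Fin m) (Fin n) K}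
    (hZ : Z ∈ Submodule.span K (Set.range (slice3 T))) : Z.rank ≤ tensorRank T := by
  refine le_csInf ⟨r, u, v, w, hT⟩ ?_
  rintro r' ⟨u', v', w', hT'⟩
  simpa using rank_le_of_mem_span_vecMulVec (span_slice3_le_span_vecMulVec hT' hZ)

end TensorRank

theorem span_slices_contains_rank_r_matrix {m n p r : ℕ} [Infinite K]
    (T : Fin m → Fin n → Fin p → K)
    (u : Fin r → Fin m → K) (v : Fin r → Fin n → K) (w : Fin r → Fin p → K)
    (hT : T = fun a b c => ∑ i, u i a * v i b * w i c)
    (hu : LinearIndependent K u) (hv : LinearIndependent K v)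
    (hw : ∀ i, w i ≠ 0) :
    (∃ Z ∈ Submodule.span K (Set.range (slice3 T)), Z.rank = r) ∧
    tensorRank T = r := by
  obtain ⟨c, hc⟩ := exists_forall_dotProduct_ne_zero w hw
  have hZ : ∑ k, c k • slice3 T k ∈ Submodule.span K (Set.range (slice3 T)) :=
    Submodule.sum_mem _ fun k _ => Submodule.smul_mem _ _ (Submodule.subset_span ⟨k, rfl⟩)
  have hZr : (∑ k, c k • slice3 T k).rank = r := by
    rw [sum_smul_slice3_eq hT, rank_sum_smul_vecMulVec hu hv hc, Fintype.card_fin]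
  exact ⟨⟨_, hZ, hZr⟩,
    le_antisymm (tensorRank_le hT) (hZr ▸ rank_le_tensorRank_of_mem_span_slice3 hT hZ)⟩
end

section
/- Let T ∈ K^{m×n×p} be a tensor of tensor rank r with a decomposition T = Σ uᵢ⊗vᵢ⊗wᵢ satisfying: the uᵢ are linearly independent, the vᵢ are linearly independent, and all wᵢ are nonzero. Then in any matrix-vector decomposition T = Σ_{ℓ=1}^q M_ℓ ⊗ γ_ℓ of rank r, the subspaces Im(M₁),…,Im(M_q) are in direct sum. -/
open Matrix BigOperators Polynomial

variable {K : Type*} [Field K]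

/-! Every `u i` lies in the sum `S` of the column spaces `Im(M ℓ)`: a linear form vanishing on `S`
kills every fiber `T(·, b, c)`, and since the `v i` are independent and the `w i` nonzero this
forces it to kill every `u i`. Hence `r = dim span(u) ≤ dim S`, while the dimensions of the
`Im(M ℓ)` add up to `r`; by rank–nullity the summation map `∏ Im(M ℓ) → S` is then injective. -/

open Module

section SumOfSubspaces

variable {V : Type*} [AddCommGroup V] [Module K V] {q : ℕ} (E : Fin q → Submodule K V)

lemma range_lsum_subtype :
    LinearMap.range (LinearMap.lsum K (fun ℓ => E ℓ) K fun ℓ => (E ℓ).subtype) = ⨆ ℓ, E ℓ := by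
  apply le_antisymm
  · rintro _ ⟨x, rfl⟩
    simp only [LinearMap.lsum_apply, LinearMap.sum_apply]
    exact Submodule.sum_mem _ fun ℓ _ => Submodule.mem_iSup_of_mem ℓ (x ℓ).2
  · refine iSup_le fun ℓ y hy => ⟨Pi.single ℓ ⟨y, hy⟩, ?_⟩
    simp only [LinearMap.lsum_apply, LinearMap.sum_apply]
    rw [Fintype.sum_eq_single ℓ fun j hj => by simp [Pi.single_eq_of_ne hj]]
    simp

variable [FiniteDimensional K V]

lemma directSumFamily_of_sum_finrank_le
    (h : ∑ ℓ, finrank K ↥(E ℓ) ≤ finrank K ↥(⨆ ℓ, E ℓ)) : DirectSumFamily E := by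
  set Φ := LinearMap.lsum K (fun ℓ => E ℓ) K fun ℓ => (E ℓ).subtype
  have hker : LinearMap.ker Φ = ⊥ := by
    have := LinearMap.finrank_range_add_finrank_ker Φ
    rw [range_lsum_subtype, finrank_pi_fintype] at this
    exact Submodule.finrank_eq_zero.mp (by omega)
  intro x hx hsum ℓ
  have : (fun ℓ => (⟨x ℓ, hx ℓ⟩ : E ℓ)) ∈ LinearMap.ker Φ := by
    simpa [Φ, LinearMap.lsum_apply] using hsum
  rw [hker, Submodule.mem_bot] at this
  simpa using congrFun this ℓ

end SumOfSubspaces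

section Fibers

variable {m n p : ℕ} (T : Fin m → Fin n → Fin p → K)

lemma dual_apply_eq_zero_of_forall_fiber {r : ℕ} (u : Fin r → Fin m → K)
    {v : Fin r → Fin n → K} {w : Fin r → Fin p → K}
    (hT : T = fun a b c => ∑ i, u i a * v i b * w i c)
    (hv : LinearIndependent K v) (hw : ∀ i, w i ≠ 0)
    (φ : Dual K (Fin m → K)) (hφ : ∀ b c, φ (fun a => T a b c) = 0) (i : Fin r) :
    φ (u i) = 0 := by
  have hcoeff : ∀ c, φ (u i) * w i c = 0 := by
    intro c
    refine Fintype.linearIndependent_iff.mp hv (fun j => φ (u j) * w j c) ?_ i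
    funext b
    have hfiber : (fun a => T a b c) = ∑ j, (v j b * w j c) • u j := by
      funext a
      simp [hT, Finset.sum_apply, mul_comm, mul_left_comm]
    have := hφ b c
    rw [hfiber, map_sum] at this
    simp only [map_smul, smul_eq_mul] at this
    simp only [Finset.sum_apply, Pi.smul_apply, smul_eq_mul, Pi.zero_apply]
    convert this using 2
    ring
  obtain ⟨c, hc⟩ := Function.ne_iff.mp (hw i)
  exact (mul_eq_zero.mp (hcoeff c)).resolve_right hc

lemma fiber_mem_iSup_colSpace {q : ℕ} (M : Fin q → Matrix (Fin m) (Fin n) K)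
    (γ : Fin q → Fin p → K) (hT : T = fun a b c => ∑ ℓ, M ℓ a b * γ ℓ c) (b : Fin n) (c : Fin p) :
    (fun a => T a b c) ∈ ⨆ ℓ, colSpace (M ℓ) := by
  have hfiber : (fun a => T a b c) = ∑ ℓ, γ ℓ c • (M ℓ).mulVecLin (Pi.single b 1) := by
    funext a
    simp [hT, Finset.sum_apply, mul_comm]
  rw [hfiber]
  exact Submodule.sum_mem _ fun ℓ _ =>
    Submodule.smul_mem _ _ (Submodule.mem_iSup_of_mem ℓ (LinearMap.mem_range_self _ _))

end Fibers

theorem images_direct_sum_in_min_mv_decomp_general {m n p r : ℕ}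
    (T : Fin m → Fin n → Fin p → K)
    (u : Fin r → Fin m → K) (v : Fin r → Fin n → K) (w : Fin r → Fin p → K)
    (hT : T = fun a b c => ∑ i, u i a * v i b * w i c)
    (hu : LinearIndependent K u) (hv : LinearIndependent K v)
    (hw : ∀ i, w i ≠ 0)
    {q : ℕ} (M : Fin q → Matrix (Fin m) (Fin n) K) (γ : Fin q → Fin p → K)
    (hdec : IsMVDecomp T M γ) (hq : (∑ ℓ, (M ℓ).rank) = r) :
    DirectSumFamily (fun ℓ => colSpace (M ℓ)) := by
  set S := ⨆ ℓ, colSpace (M ℓ)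
  have hu_mem : ∀ i, u i ∈ S := fun i =>
    (Subspace.forall_mem_dualAnnihilator_apply_eq_zero_iff S (u i)).mp fun φ hφ =>
      dual_apply_eq_zero_of_forall_fiber T u hT hv hw φ (fun b c =>
        (Submodule.mem_dualAnnihilator φ).mp hφ _
          (fiber_mem_iSup_colSpace T M γ hdec.2.2.2 b c)) i
  have hr : r ≤ finrank K S := by
    simpa [finrank_span_eq_card hu] using
      Submodule.finrank_mono (Submodule.span_le.mpr (Set.range_subset_iff.mpr hu_mem))
  exact directSumFamily_of_sum_finrank_le _ (hq ▸ hr)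

theorem images_direct_sum_in_min_mv_decomp {m n p r : ℕ} [Infinite K]
    (T : Fin m → Fin n → Fin p → K)
    (u : Fin r → Fin m → K) (v : Fin r → Fin n → K) (w : Fin r → Fin p → K)
    (hT : T = fun a b c => ∑ i, u i a * v i b * w i c)
    (hu : LinearIndependent K u) (hv : LinearIndependent K v)
    (hw : ∀ i, w i ≠ 0)
    (hrank : tensorRank T = r)
    {q : ℕ} (M : Fin q → Matrix (Fin m) (Fin n) K) (γ : Fin q → Fin p → K)
    (hdec : IsMVDecomp T M γ) (hq : (∑ ℓ, (M ℓ).rank) = r) :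
    DirectSumFamily (fun ℓ => colSpace (M ℓ)) :=
  images_direct_sum_in_min_mv_decomp_general T u v w hT hu hv hw M γ hdec hq
end

section
/- Suppose a tensor T ∈ K^{m×n×p} has a matrix-vector decomposition T = Σ_{ℓ=1}^q M_ℓ ⊗ w_ℓ where the subspaces Im(M_ℓ) are in direct sum and the subspaces Im(M_ℓᵀ) are also in direct sum. Then rank(T) = Σ_ℓ rank(M_ℓ), and this is the unique matrix-vector decomposition of T of minimum rank. -/
open Matrix BigOperators Polynomial

variable {K : Type*} [Field K]

/-!
The mode-1 fibres of `T` (the columns of its slices `S_k = ∑ ℓ, w ℓ k • M ℓ`) span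
`V = ⨆ ℓ, Im M ℓ`: independence of the row spaces gives matrices `Q ℓ` with
`M ℓ' * Q ℓ = δ ℓ ℓ' • M ℓ`, so `S_k * Q ℓ = w ℓ k • M ℓ`. By independence of the column spaces
`dim V = ∑ ℓ, rank (M ℓ)`. A decomposition of `T` into `r` rank-one terms puts `V` inside the
span of `r` vectors, which is the lower bound on the tensor rank; rank factorisations of the
`M ℓ` give the upper bound.

If `T = ∑ j, M' j ⊗ w' j` with the same total rank, then `V ≤ ⨆ j, Im M' j` forces the
`Im M' j` to be independent as well, so there are matrices `P j` with
`P j * M' j' = δ j j' • M' j`. Computing `P j * S_k * Q ℓ` in two ways gives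
`w' j k • (M' j * Q ℓ) = w ℓ k • (P j * M ℓ)`, so `P j * M ℓ ≠ 0` makes `w ℓ` and `w' j`
collinear. Since both families of vectors are pairwise non-collinear, the relation
`P j * M ℓ ≠ 0` is the graph of a bijection `π`, and `w' j k • M' j = P j * S_k` collapses to
`w (π j) k • M (π j)`.
-/

open Module

theorem exists_equiv_of_rel {α β γ : Type*} {f : α → γ} {g : β → γ} (hf : f.Injective)
    (hg : g.Injective) {R : α → β → Prop} (hR : ∀ a b, R a b → f a = g b)
    (hα : ∀ a, ∃ b, R a b) (hβ : ∀ b, ∃ a, R a b) :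
    ∃ e : α ≃ β, ∀ a b, R a b ↔ e a = b := by
  choose e he using hα
  have hRe (a b) (hab : R a b) : e a = b := hg ((hR a _ (he a)).symm.trans (hR a b hab))
  refine ⟨Equiv.ofBijective e ⟨fun a a' h => hf ?_, fun b => ?_⟩,
    fun a b => ⟨hRe a b, fun h => h ▸ he a⟩⟩
  · rw [hR a _ (he a), hR a' _ (he a'), h]
  · obtain ⟨a, hab⟩ := hβ b
    exact ⟨a, hRe a b hab⟩

section Subspaces

variable {ι W : Type*} [AddCommGroup W] [Module K W]

theorem directSumFamily_iff_iSupIndep {q : ℕ} (E : Fin q → Submodule K W) :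
    DirectSumFamily E ↔ iSupIndep E := by
  classical
  rw [iSupIndep_iff_finsetSum_eq_zero_imp_eq_zero]
  refine ⟨fun h s v hv hsum i hi => ?_,
    fun h x hx hsum i => h _ x (fun i _ => hx i) hsum i (Finset.mem_univ i)⟩
  have := h (fun i => if i ∈ s then v i else 0) (fun i => by split_ifs <;> simp_all)
    (by rwa [Finset.sum_ite_mem, Finset.univ_inter]) i
  simpa [hi] using this

theorem iSupIndep.exists_projections [DecidableEq ι] {E : ι → Submodule K W}
    (h : iSupIndep E) :
    ∃ P : ι → W →ₗ[K] W, ∀ i j, ∀ x ∈ E j, P i x = if j = i then x else 0 := by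
  have (i : ι) : ∃ P : W →ₗ[K] W, ∀ j, ∀ x ∈ E j, P x = if j = i then x else 0 := by
    obtain ⟨C, hle, hC⟩ := (h i).symm.exists_isCompl
    refine ⟨(E i).projection C hC.symm, fun j x hx => ?_⟩
    split_ifs with hji
    · exact Submodule.projection_apply_of_mem_left _ (hji ▸ hx)
    · exact Submodule.projection_apply_of_mem_right _
        (hle (Submodule.mem_iSup_of_mem j (Submodule.mem_iSup_of_mem hji hx)))
  choose P hP using this
  exact ⟨P, fun i j => hP i j⟩

theorem sum_apply_eq_self_of_mem_iSup [Fintype ι] [DecidableEq ι] {E : ι → Submodule K W}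
    {P : ι → W →ₗ[K] W} (hP : ∀ i j, ∀ x ∈ E j, P i x = if j = i then x else 0) {x : W}
    (hx : x ∈ ⨆ i, E i) : ∑ i, P i x = x := by
  suffices (⨆ i, E i) ≤ LinearMap.eqLocus (∑ i, P i) LinearMap.id by
    simpa using this hx
  refine iSup_le fun j y hy => ?_
  simp [hP _ j y hy]

theorem finrank_iSup_add_finrank_ker_lsum [Fintype ι] [DecidableEq ι] [FiniteDimensional K W]
    (E : ι → Submodule K W) :
    finrank K ↥(⨆ i, E i) + finrank K (LinearMap.ker (DFinsupp.lsum ℕ fun i => (E i).subtype))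
      = ∑ i, finrank K (E i) := by
  rw [Submodule.iSup_eq_range_dfinsupp_lsum, LinearMap.finrank_range_add_finrank_ker]
  exact finrank_directSum K fun i => E i

theorem finrank_iSup_le_sum [Fintype ι] [FiniteDimensional K W] (E : ι → Submodule K W) :
    finrank K ↥(⨆ i, E i) ≤ ∑ i, finrank K (E i) := by
  classical
  exact (finrank_iSup_add_finrank_ker_lsum E).symm ▸ Nat.le_add_right _ _

theorem iSupIndep_iff_finrank_iSup_eq_sum [Fintype ι] [FiniteDimensional K W]
    {E : ι → Submodule K W} :
    iSupIndep E ↔ finrank K ↥(⨆ i, E i) = ∑ i, finrank K (E i) := by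
  classical
  rw [iSupIndep_iff_dfinsupp_lsum_injective, ← LinearMap.ker_eq_bot,
    ← Submodule.finrank_eq_zero, ← finrank_iSup_add_finrank_ker_lsum E]
  omega

theorem Submodule.span_singleton_eq_of_smul_eq_smul {a b : ι → K} {A B : W} (hB : B ≠ 0)
    (hb : b ≠ 0) (h : ∀ k, a k • A = b k • B) : K ∙ b = K ∙ a := by
  obtain ⟨φ, hφ⟩ : ∃ φ : Module.Dual K W, φ B ≠ 0 := by
    by_contra! hφ
    exact hB ((Module.forall_dual_apply_eq_zero_iff K B).1 hφ)
  have hba : b = (φ A / φ B) • a := funext fun k => by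
    have := congr_arg φ (h k)
    simp only [map_smul, smul_eq_mul] at this
    simp only [Pi.smul_apply, smul_eq_mul]
    field_simp
    linear_combination this.symm
  have hc : φ A / φ B ≠ 0 := fun hc => hb (by rw [hba, hc, zero_smul])
  rw [hba, Submodule.span_singleton_smul_eq hc.isUnit]

theorem injective_span_singleton_of_not_collinear {w : ι → W}
    (hw : ∀ i i', i ≠ i' → ∀ c : K, w i' ≠ c • w i) :
    Function.Injective fun i => K ∙ w i := by
  intro i i' h
  by_contra hne
  have : w i' ∈ K ∙ w i := by
    simpa only [h] using Submodule.mem_span_singleton_self (w i')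
  obtain ⟨c, hc⟩ := Submodule.mem_span_singleton.1 this
  exact hw i i' hne c hc.symm

end Subspaces

section ColumnSpaces

variable {m n r : ℕ}

theorem finrank_colSpace (A : Matrix (Fin m) (Fin n) K) :
    finrank K (colSpace A) = A.rank := rfl

theorem colSpace_le_iff {A : Matrix (Fin m) (Fin n) K} {G : Submodule K (Fin m → K)} :
    colSpace A ≤ G ↔ ∀ b, A.col b ∈ G := by
  rw [colSpace, Matrix.range_mulVecLin, Submodule.span_le, Set.range_subset_iff]
  rfl

theorem col_mem_colSpace (A : Matrix (Fin m) (Fin n) K) (b : Fin n) : A.col b ∈ colSpace A :=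
  colSpace_le_iff.1 le_rfl b

theorem colSpace_mul_le (A : Matrix (Fin m) (Fin n) K) (B : Matrix (Fin n) (Fin r) K) :
    colSpace (A * B) ≤ colSpace A := by
  rw [colSpace, colSpace, Matrix.mulVecLin_mul]
  exact LinearMap.range_comp_le_range _ _

theorem Matrix.exists_eq_sum_rankOne (A : Matrix (Fin m) (Fin n) K) :
    ∃ (u : Fin A.rank → Fin m → K) (v : Fin A.rank → Fin n → K),
      ∀ a b, A a b = ∑ i, u i a * v i b := by
  let B : Basis (Fin A.rank) K (colSpace A) :=
    Module.finBasisOfFinrankEq K _ (finrank_colSpace A)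
  refine ⟨fun i => B i, fun i b => B.repr ⟨A.col b, col_mem_colSpace A b⟩ i, fun a b => ?_⟩
  have := congr_arg (fun x : colSpace A => (x : Fin m → K) a)
    (B.sum_repr ⟨A.col b, col_mem_colSpace A b⟩)
  simp only [Submodule.coe_sum, Submodule.coe_smul, Finset.sum_apply, Pi.smul_apply,
    smul_eq_mul, Matrix.col_apply] at this
  simpa only [mul_comm] using this.symm

theorem exists_colSpace_projections {ι : Type*} [Fintype ι] [DecidableEq ι]
    (N : ι → Matrix (Fin m) (Fin n) K) (h : iSupIndep fun i => colSpace (N i)) :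
    ∃ P : ι → Matrix (Fin m) (Fin m) K, (∀ i j, P i * N j = if j = i then N i else 0) ∧
      ∀ A : Matrix (Fin m) (Fin r) K, colSpace A ≤ ⨆ i, colSpace (N i) →
        ∑ i, P i * A = A := by
  obtain ⟨P, hP⟩ := h.exists_projections
  refine ⟨fun i => LinearMap.toMatrix' (P i), fun i j => ?_, fun A hA => ?_⟩
  · apply Matrix.toLin'.injective
    refine LinearMap.ext fun x => ?_
    have := hP i j _ ⟨x, rfl⟩
    split_ifs at this ⊢ with hji
    · subst hji
      simpa [Matrix.toLin'_mul] using this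
    · simpa [Matrix.toLin'_mul] using this
  · apply Matrix.toLin'.injective
    refine LinearMap.ext fun x => ?_
    simpa [Matrix.toLin'_mul] using sum_apply_eq_self_of_mem_iSup hP (hA ⟨x, rfl⟩)

theorem exists_rowSpace_projections {ι : Type*} [Fintype ι] [DecidableEq ι]
    (N : ι → Matrix (Fin m) (Fin n) K) (h : iSupIndep fun i => colSpace (N i)ᵀ) :
    ∃ Q : ι → Matrix (Fin n) (Fin n) K, ∀ i j, N j * Q i = if j = i then N i else 0 := by
  obtain ⟨P, hP, -⟩ := exists_colSpace_projections (r := 0) (fun i => (N i)ᵀ) h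
  refine ⟨fun i => (P i)ᵀ, fun i j => Matrix.transpose_injective ?_⟩
  simpa [Matrix.transpose_mul, apply_ite] using hP i j

end ColumnSpaces

section Slices

variable {m n p q : ℕ} {T : Fin m → Fin n → Fin p → K}
  {M : Fin q → Matrix (Fin m) (Fin n) K} {w : Fin q → Fin p → K}

theorem slice3_eq_sum_smul (hT : T = fun a b c => ∑ ℓ, M ℓ a b * w ℓ c) (k : Fin p) :
    slice3 T k = ∑ ℓ, w ℓ k • M ℓ := by
  ext a b
  simp [slice3, hT, Matrix.sum_apply, mul_comm]

theorem iSup_colSpace_slice3_le (hT : T = fun a b c => ∑ ℓ, M ℓ a b * w ℓ c) :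
    ⨆ k, colSpace (slice3 T k) ≤ ⨆ ℓ, colSpace (M ℓ) := by
  refine iSup_le fun k => colSpace_le_iff.2 fun b => ?_
  have : (slice3 T k).col b = ∑ ℓ, w ℓ k • (M ℓ).col b := by
    funext a
    simp [slice3_eq_sum_smul hT, Matrix.sum_apply]
  rw [this]
  exact Submodule.sum_mem _ fun ℓ _ => Submodule.smul_mem _ _
    (Submodule.mem_iSup_of_mem ℓ (col_mem_colSpace _ b))

theorem colSpace_le_iSup_colSpace_slice3 (hT : T = fun a b c => ∑ ℓ, M ℓ a b * w ℓ c)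
    {ℓ : Fin q} (hw : w ℓ ≠ 0) {Q : Matrix (Fin n) (Fin n) K}
    (hQ : ∀ ℓ', M ℓ' * Q = if ℓ' = ℓ then M ℓ else 0) :
    colSpace (M ℓ) ≤ ⨆ k, colSpace (slice3 T k) := by
  obtain ⟨k, hk⟩ : ∃ k, w ℓ k ≠ 0 := Function.ne_iff.1 hw
  have : M ℓ = slice3 T k * ((w ℓ k)⁻¹ • Q) := by
    simp [slice3_eq_sum_smul hT, Matrix.sum_mul, Matrix.smul_mul, hQ, smul_smul, hk]
  rw [this]
  exact (colSpace_mul_le _ _).trans (le_iSup (fun k => colSpace (slice3 T k)) k)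

theorem iSup_colSpace_slice3_eq (hT : T = fun a b c => ∑ ℓ, M ℓ a b * w ℓ c)
    (hw : ∀ ℓ, w ℓ ≠ 0) (hrow : iSupIndep fun ℓ => colSpace (M ℓ)ᵀ) :
    ⨆ k, colSpace (slice3 T k) = ⨆ ℓ, colSpace (M ℓ) := by
  obtain ⟨Q, hQ⟩ := exists_rowSpace_projections M hrow
  exact le_antisymm (iSup_colSpace_slice3_le hT)
    (iSup_le fun ℓ => colSpace_le_iSup_colSpace_slice3 hT (hw ℓ) (hQ ℓ))

theorem finrank_iSup_colSpace_slice3_le {r : ℕ} (u : Fin r → Fin m → K)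
    (v : Fin r → Fin n → K) (x : Fin r → Fin p → K)
    (hT : T = fun a b c => ∑ i, u i a * v i b * x i c) :
    finrank K ↥(⨆ k, colSpace (slice3 T k)) ≤ r := by
  have hle : ⨆ k, colSpace (slice3 T k) ≤ Submodule.span K (Set.range u) := by
    refine iSup_le fun k => colSpace_le_iff.2 fun b => ?_
    have : (slice3 T k).col b = ∑ i, (v i b * x i k) • u i := by
      funext a
      simp only [Matrix.col_apply, slice3, hT, Finset.sum_apply, Pi.smul_apply, smul_eq_mul]
      exact Finset.sum_congr rfl fun i _ => by ring
    rw [this]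
    exact Submodule.sum_mem _ fun i _ =>
      Submodule.smul_mem _ _ (Submodule.subset_span ⟨i, rfl⟩)
  calc finrank K ↥(⨆ k, colSpace (slice3 T k))
      ≤ finrank K (Submodule.span K (Set.range u)) := Submodule.finrank_mono hle
    _ ≤ r := by simpa [Set.finrank] using finrank_range_le_card (R := K) u

theorem exists_rankOne_sum_of_length_sum_rank (hT : T = fun a b c => ∑ ℓ, M ℓ a b * w ℓ c) :
    ∃ (u : Fin (∑ ℓ, (M ℓ).rank) → Fin m → K) (v : Fin (∑ ℓ, (M ℓ).rank) → Fin n → K)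
      (x : Fin (∑ ℓ, (M ℓ).rank) → Fin p → K),
      T = fun a b c => ∑ i, u i a * v i b * x i c := by
  choose u v huv using fun ℓ => (M ℓ).exists_eq_sum_rankOne
  let e := (finSigmaFinEquiv (n := fun ℓ => (M ℓ).rank)).symm
  refine ⟨fun i => u (e i).1 (e i).2, fun i => v (e i).1 (e i).2, fun i => w (e i).1, ?_⟩
  rw [hT]
  funext a b c
  rw [e.sum_comp (fun s => u s.1 s.2 a * v s.1 s.2 b * w s.1 c), Fintype.sum_sigma]
  simp only [huv, Finset.sum_mul]

theorem tensorRank_eq_sum_rank (hT : T = fun a b c => ∑ ℓ, M ℓ a b * w ℓ c)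
    (hw : ∀ ℓ, w ℓ ≠ 0) (hcol : iSupIndep fun ℓ => colSpace (M ℓ))
    (hrow : iSupIndep fun ℓ => colSpace (M ℓ)ᵀ) :
    tensorRank T = ∑ ℓ, (M ℓ).rank := by
  have hdim : finrank K ↥(⨆ k, colSpace (slice3 T k)) = ∑ ℓ, (M ℓ).rank := by
    rw [iSup_colSpace_slice3_eq hT hw hrow, iSupIndep_iff_finrank_iSup_eq_sum.1 hcol]
    rfl
  exact IsLeast.csInf_eq ⟨exists_rankOne_sum_of_length_sum_rank hT,
    fun r ⟨u, v, x, hT'⟩ => hdim ▸ finrank_iSup_colSpace_slice3_le u v x hT'⟩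

end Slices

theorem exists_equiv_smul_eq_of_projections {m n p q q' : ℕ} {T : Fin m → Fin n → Fin p → K}
    {M : Fin q → Matrix (Fin m) (Fin n) K} {w : Fin q → Fin p → K}
    {M' : Fin q' → Matrix (Fin m) (Fin n) K} {w' : Fin q' → Fin p → K}
    (hdec : IsMVDecomp T M w) (hdec' : IsMVDecomp T M' w')
    {P : Fin q' → Matrix (Fin m) (Fin m) K}
    (hP : ∀ j j', P j * M' j' = if j' = j then M' j else 0)
    (hPM : ∀ ℓ, ∑ j, P j * M ℓ = M ℓ) {Q : Fin q → Matrix (Fin n) (Fin n) K}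
    (hQ : ∀ ℓ ℓ', M ℓ' * Q ℓ = if ℓ' = ℓ then M ℓ else 0) :
    ∃ π : Fin q' ≃ Fin q, ∀ j k, w' j k • M' j = w (π j) k • M (π j) := by
  obtain ⟨hM0, hw0, hwnc, hT⟩ := hdec
  obtain ⟨hM0', hw0', hwnc', hT'⟩ := hdec'
  have hPS (j k) : w' j k • M' j = ∑ ℓ, w ℓ k • (P j * M ℓ) := by
    have := congr_arg (P j * ·)
      ((slice3_eq_sum_smul hT k).symm.trans (slice3_eq_sum_smul hT' k))
    simpa [Matrix.mul_sum, hP] using this.symm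
  have hPSQ (j ℓ k) : w' j k • (M' j * Q ℓ) = w ℓ k • (P j * M ℓ) := by
    rw [← Matrix.smul_mul, hPS, Matrix.sum_mul]
    simp [Matrix.smul_mul, Matrix.mul_assoc, hQ, apply_ite]
  obtain ⟨π, hπ⟩ := exists_equiv_of_rel (R := fun j ℓ => P j * M ℓ ≠ 0)
    (injective_span_singleton_of_not_collinear hwnc')
    (injective_span_singleton_of_not_collinear hwnc)
    (fun j ℓ h => (Submodule.span_singleton_eq_of_smul_eq_smul h (hw0 ℓ) (hPSQ j ℓ)).symm)
    (fun j => by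
      by_contra! h
      obtain ⟨k, hk⟩ : ∃ k, w' j k ≠ 0 := Function.ne_iff.1 (hw0' j)
      exact hM0' j ((smul_eq_zero.1 ((hPS j k).trans (by simp [h]))).resolve_left hk))
    (fun ℓ => by
      by_contra! h
      exact hM0 ℓ ((hPM ℓ).symm.trans (by simp [h])))
  have hzero (j ℓ) (h : π j ≠ ℓ) : P j * M ℓ = 0 := not_not.1 (mt (hπ j ℓ).1 h)
  refine ⟨π, fun j k => ?_⟩
  have hM : P j * M (π j) = M (π j) :=
    (Finset.sum_eq_single j (fun j' _ hj' => hzero j' _ (π.injective.ne hj'))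
      (by simp)).symm.trans (hPM (π j))
  rw [hPS, Finset.sum_eq_single (π j) (fun ℓ _ hℓ => by rw [hzero j ℓ (Ne.symm hℓ), smul_zero])
    (by simp), hM]

theorem uniqueness_theorem_form_two_general {m n p q : ℕ}
    (T : Fin m → Fin n → Fin p → K)
    (M : Fin q → Matrix (Fin m) (Fin n) K) (w : Fin q → Fin p → K)
    (hdec : IsMVDecomp T M w)
    (hcol : DirectSumFamily (fun ℓ => colSpace (M ℓ)))
    (hrow : DirectSumFamily (fun ℓ => colSpace (M ℓ)ᵀ)) :
    tensorRank T = (∑ ℓ, (M ℓ).rank) ∧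
    (∀ (q' : ℕ) (M' : Fin q' → Matrix (Fin m) (Fin n) K) (w' : Fin q' → Fin p → K),
      IsMVDecomp T M' w' → (∑ ℓ, (M' ℓ).rank) = (∑ ℓ, (M ℓ).rank) →
      ∃ π : Fin q' ≃ Fin q, ∀ ℓ,
        (fun a b c => M' ℓ a b * w' ℓ c) =
        (fun a b c => M (π ℓ) a b * w (π ℓ) c)) := by
  rw [directSumFamily_iff_iSupIndep] at hcol hrow
  have hw := hdec.2.1
  have hT := hdec.2.2.2
  refine ⟨tensorRank_eq_sum_rank hT hw hcol hrow, fun q' M' w' hdec' hrank => ?_⟩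
  have hle : ⨆ ℓ, colSpace (M ℓ) ≤ ⨆ j, colSpace (M' j) :=
    iSup_colSpace_slice3_eq hT hw hrow ▸ iSup_colSpace_slice3_le hdec'.2.2.2
  have hcol' : iSupIndep fun j => colSpace (M' j) := by
    refine iSupIndep_iff_finrank_iSup_eq_sum.2 (le_antisymm (finrank_iSup_le_sum _) ?_)
    calc ∑ j, finrank K (colSpace (M' j)) = ∑ ℓ, (M ℓ).rank := hrank
      _ = finrank K ↥(⨆ ℓ, colSpace (M ℓ)) := (iSupIndep_iff_finrank_iSup_eq_sum.1 hcol).symm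
      _ ≤ finrank K ↥(⨆ j, colSpace (M' j)) := Submodule.finrank_mono hle
  obtain ⟨P, hP, hPM⟩ := exists_colSpace_projections M' hcol'
  obtain ⟨Q, hQ⟩ := exists_rowSpace_projections M hrow
  obtain ⟨π, hπ⟩ := exists_equiv_smul_eq_of_projections hdec hdec' hP
    (fun ℓ => hPM (M ℓ) ((le_iSup _ ℓ).trans hle)) hQ
  refine ⟨π, fun j => funext fun a => funext fun b => funext fun c => ?_⟩
  simpa [mul_comm] using congr_fun₂ (hπ j c) a b

theorem uniqueness_theorem_form_two {m n p q : ℕ} [Infinite K]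
    (T : Fin m → Fin n → Fin p → K)
    (M : Fin q → Matrix (Fin m) (Fin n) K) (w : Fin q → Fin p → K)
    (hdec : IsMVDecomp T M w)
    (hcol : DirectSumFamily (fun ℓ => colSpace (M ℓ)))
    (hrow : DirectSumFamily (fun ℓ => colSpace (M ℓ)ᵀ)) :
    tensorRank T = (∑ ℓ, (M ℓ).rank) ∧
    (∀ (q' : ℕ) (M' : Fin q' → Matrix (Fin m) (Fin n) K) (w' : Fin q' → Fin p → K),
      IsMVDecomp T M' w' → (∑ ℓ, (M' ℓ).rank) = (∑ ℓ, (M ℓ).rank) →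
      ∃ π : Fin q' ≃ Fin q, ∀ ℓ,
        (fun a b c => M' ℓ a b * w' ℓ c) =
        (fun a b c => M (π ℓ) a b * w (π ℓ) c)) :=
  uniqueness_theorem_form_two_general T M w hdec hcol hrow
end

section
/- Conversely, if T = Σ_{i=1}^r uᵢ⊗vᵢ⊗wᵢ with the uᵢ linearly independent, the vᵢ linearly independent, and every wᵢ nonzero, then T has a matrix-vector decomposition T = Σ_{ℓ=1}^q M_ℓ ⊗ w'_ℓ in which the spaces Im(M_ℓ) are in direct sum, the spaces Im(M_ℓᵀ) are in direct sum, r = Σ_ℓ rank(M_ℓ), and {w'₁,…,w'_q} ⊆ {w₁,…,w_r}. -/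
open Matrix BigOperators Polynomial

variable {K : Type*} [Field K]

/-! Group the indices `i` by the point of projective space spanned by `w i` and rescale each `u i`
so that `w i` becomes the representative of its group; the slice of group `ℓ` is then
`M ℓ = Aᵀ * B`, where the rows of `A` and `B` are the rescaled `u i` and the `v i` of the group.
Since the rows of `B` are linearly independent, `B` is surjective, so the column space of `M ℓ` is
the span of its `u i`, of dimension the size of the group; disjoint groups of a linearly independent
family span independent subspaces. The transposed statements are the same with `u` and `v`
swapped. -/

theorem Fintype.exists_fin_fiber_encoding {ι β : Type*} [Fintype ι] (f : ι → β) :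
    ∃ (q : ℕ) (g : ι → Fin q) (rep : Fin q → ι),
      Function.LeftInverse g rep ∧ ∀ i j, g i = g j ↔ f i = f j := by
  classical
  let e := (Finset.univ.image f).equivFin
  let g : ι → Fin _ := fun i => e ⟨f i, Finset.mem_image_of_mem f (Finset.mem_univ i)⟩
  have hrep : ∀ ℓ, ∃ i, f i = e.symm ℓ := fun ℓ => by
    obtain ⟨i, -, hi⟩ := Finset.mem_image.1 (e.symm ℓ).2
    exact ⟨i, hi⟩
  choose rep hrep using hrep
  refine ⟨_, g, rep, fun ℓ => ?_, fun i j => ?_⟩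
  · simp only [g, hrep, Subtype.coe_eta, Equiv.apply_symm_apply]
  · simp only [g, e.apply_eq_iff_eq, Subtype.mk.injEq]

theorem exists_fin_collinearity_classes {V ι : Type*} [AddCommGroup V] [Module K V] [Fintype ι]
    (w : ι → V) (hw : ∀ i, w i ≠ 0) :
    ∃ (q : ℕ) (g : ι → Fin q) (rep : Fin q → ι) (d : ι → Kˣ),
      Function.LeftInverse g rep ∧ (∀ i, w i = (d i : K) • w (rep (g i))) ∧
      ∀ ℓ ℓ', ℓ ≠ ℓ' → ∀ c : K, w (rep ℓ') ≠ c • w (rep ℓ) := by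
  obtain ⟨q, g, rep, hg_rep, hg⟩ :=
    Fintype.exists_fin_fiber_encoding fun i => Projectivization.mk K (w i) (hw i)
  have hd : ∀ i, ∃ d : Kˣ, w i = (d : K) • w (rep (g i)) := fun i => by
    obtain ⟨d, hd⟩ := (Projectivization.mk_eq_mk_iff K _ _ _ _).1 ((hg _ _).1 (hg_rep (g i)))
    exact ⟨d⁻¹, by rw [← hd, ← Units.smul_def, inv_smul_smul]⟩
  choose d hd using hd
  refine ⟨q, g, rep, d, hg_rep, hd, fun ℓ ℓ' hne c hc => hne ?_⟩
  have hc0 : c ≠ 0 := by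
    rintro rfl
    exact hw _ (hc.trans (zero_smul K _))
  rw [← hg_rep ℓ, ← hg_rep ℓ', hg, Projectivization.mk_eq_mk_iff' K]
  exact ⟨c⁻¹, by rw [hc, inv_smul_smul₀ hc0]⟩

theorem Matrix.mulVec_surjective_of_linearIndependent_row {ι n : Type*} [Fintype ι] [Fintype n]
    {B : Matrix ι n K} (hB : LinearIndependent K B.row) : Function.Surjective B.mulVec := by
  have : LinearMap.range B.mulVecLin = ⊤ :=
    Submodule.eq_top_of_finrank_eq
      (hB.rank_matrix.trans (Module.finrank_fintype_fun_eq_card K).symm)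
  exact LinearMap.range_eq_top.1 this

theorem Matrix.range_mulVecLin_transpose_mul {ι m n : Type*} [Fintype ι] [Fintype n]
    (A : Matrix ι m K) {B : Matrix ι n K} (hB : LinearIndependent K B.row) :
    LinearMap.range (Aᵀ * B).mulVecLin = Submodule.span K (Set.range A.row) := by
  rw [Matrix.mulVecLin_mul, LinearMap.range_comp_of_range_eq_top _
    (LinearMap.range_eq_top.2 (Matrix.mulVec_surjective_of_linearIndependent_row hB)),
    Matrix.range_mulVecLin, Matrix.col_transpose]

theorem Matrix.rank_transpose_mul {ι m n : Type*} [Fintype ι] [Fintype n]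
    {A : Matrix ι m K} {B : Matrix ι n K} (hA : LinearIndependent K A.row)
    (hB : LinearIndependent K B.row) : (Aᵀ * B).rank = Fintype.card ι := by
  rw [Matrix.rank, Matrix.range_mulVecLin_transpose_mul A hB, finrank_span_eq_card hA]

theorem LinearIndependent.iSupIndep_span_fiber {ι κ V : Type*} [AddCommGroup V] [Module K V]
    {u : ι → V} (hu : LinearIndependent K u) (g : ι → κ) :
    iSupIndep fun j => Submodule.span K (Set.range fun i : {i // g i = j} => u i) := by
  refine iSupIndep_def.2 fun j => Disjoint.mono ?_ ?_ (hu.disjoint_span_image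
    (s := {i | g i = j}) (t := {i | g i ≠ j}) (Set.disjoint_left.2 fun i h h' => h' h))
  · exact Submodule.span_mono (by rintro _ ⟨i, rfl⟩; exact ⟨i, i.2, rfl⟩)
  · refine iSup₂_le fun k hk => Submodule.span_mono ?_
    rintro _ ⟨i, rfl⟩
    exact ⟨i, i.2.trans_ne hk, rfl⟩

theorem iSupIndep.directSumFamily {q : ℕ} {W : Type*} [AddCommGroup W] [Module K W]
    {E : Fin q → Submodule K W} (hE : iSupIndep E) : DirectSumFamily E := fun x hx hsum ℓ =>
  (iSupIndep_iff_finsetSum_eq_zero_imp_eq_zero E).1 hE Finset.univ x (fun ℓ _ => hx ℓ) hsum ℓ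
    (Finset.mem_univ ℓ)

theorem sum_rankOne_eq_sum_transpose_mul_fiber {ι κ m n P : Type*} [Fintype ι] [Fintype κ]
    [DecidableEq κ] (u : ι → m → K) (v : ι → n → K) (w : ι → P → K) (g : ι → κ)
    (d : ι → K) (w' : κ → P → K) (hw : ∀ i, w i = d i • w' (g i)) :
    (fun a b c => ∑ i, u i a * v i b * w i c) = fun a b c =>
      ∑ ℓ, ((Matrix.of fun i : {i // g i = ℓ} => d i • u i)ᵀ *
        Matrix.of fun i : {i // g i = ℓ} => v i) a b * w' ℓ c := by
  funext a b c
  rw [← Fintype.sum_fiberwise g]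
  refine Finset.sum_congr rfl fun ℓ _ => ?_
  rw [Matrix.mul_apply, Finset.sum_mul]
  refine Finset.sum_congr rfl fun ⟨i, hi⟩ _ => ?_
  subst hi
  simp only [hw i, Pi.smul_apply, smul_eq_mul, transpose_apply, of_apply]
  ring

theorem rank_one_decomp_to_mv_decomp {m n p r : ℕ}
    (T : Fin m → Fin n → Fin p → K)
    (u : Fin r → Fin m → K) (v : Fin r → Fin n → K) (w : Fin r → Fin p → K)
    (hT : T = fun a b c => ∑ i, u i a * v i b * w i c)
    (hu : LinearIndependent K u) (hv : LinearIndependent K v)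
    (hw : ∀ i, w i ≠ 0) :
    ∃ (q : ℕ) (M : Fin q → Matrix (Fin m) (Fin n) K) (w' : Fin q → Fin p → K),
      IsMVDecomp T M w' ∧
      DirectSumFamily (fun ℓ => colSpace (M ℓ)) ∧
      DirectSumFamily (fun ℓ => colSpace (M ℓ)ᵀ) ∧
      r = (∑ ℓ, (M ℓ).rank) ∧
      (∀ ℓ, ∃ i, w' ℓ = w i) := by
  obtain ⟨q, g, rep, d, hg_rep, hwd, hw'⟩ := exists_fin_collinearity_classes (K := K) w hw
  let A ℓ : Matrix {i // g i = ℓ} (Fin m) K := Matrix.of fun i => (d i : K) • u i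
  let B ℓ : Matrix {i // g i = ℓ} (Fin n) K := Matrix.of fun i => v i
  have hA ℓ : LinearIndependent K (A ℓ).row :=
    (hu.units_smul d).comp Subtype.val Subtype.val_injective
  have hB ℓ : LinearIndependent K (B ℓ).row := hv.comp Subtype.val Subtype.val_injective
  have hrank ℓ : ((A ℓ)ᵀ * B ℓ).rank = Fintype.card {i // g i = ℓ} :=
    Matrix.rank_transpose_mul (hA ℓ) (hB ℓ)
  refine ⟨q, fun ℓ => (A ℓ)ᵀ * B ℓ, fun ℓ => w (rep ℓ),
    ⟨fun ℓ h => ?_, fun ℓ => hw _, hw', ?_⟩, ?_, ?_, ?_, fun ℓ => ⟨rep ℓ, rfl⟩⟩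
  · have := hrank ℓ
    rw [show (A ℓ)ᵀ * B ℓ = 0 from h, Matrix.rank_zero] at this
    exact (Fintype.card_pos_iff.2 ⟨⟨rep ℓ, hg_rep ℓ⟩⟩).ne this
  · exact hT.trans (sum_rankOne_eq_sum_transpose_mul_fiber u v w g (fun i => d i)
      (fun ℓ => w (rep ℓ)) hwd)
  · convert ((hu.units_smul d).iSupIndep_span_fiber g).directSumFamily using 2 with ℓ
    exact Matrix.range_mulVecLin_transpose_mul _ (hB ℓ)
  · convert (hv.iSupIndep_span_fiber g).directSumFamily using 2 with ℓ
    rw [Matrix.transpose_mul, Matrix.transpose_transpose]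
    exact Matrix.range_mulVecLin_transpose_mul _ (hA ℓ)
  · simp only [hrank]
    rw [← Fintype.card_sigma, Fintype.card_congr (Equiv.sigmaFiberEquiv g), Fintype.card_fin]
end

section
/- Let A = UA'Vᵀ and B = UB'Vᵀ where U is m×r, V is n×r, A',B' are r×r, and r ≤ min(m,n). Then every r×r minor of the pencil A − λB (as a polynomial in λ) is a scalar multiple of det(A' − λB'). -/
open Matrix BigOperators Polynomial

variable {K : Type*} [Field K]

/-
Over `K[X]` the pencil factors as `A - λB = U (A' - λB') Vᵀ`, so an `r × r` minor of it, taking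
rows `f` and columns `g`, is the product of the three square determinants
`det U[f, :] · det(A' - λB') · det Vᵀ[:, g]`, whose outer factors are constants.
-/

namespace Matrix

variable {R : Type*} [CommRing R] {ι m n : Type*}

theorem pencil_mul_mul [Fintype m] (P : Matrix n m R) (M N : Matrix m m R) (Q : Matrix m ι R) :
    (P * M * Q).map Polynomial.C - (X : R[X]) • (P * N * Q).map Polynomial.C =
      P.map Polynomial.C * (M.map Polynomial.C - (X : R[X]) • N.map Polynomial.C) *
        Q.map Polynomial.C := by
  simp only [Matrix.map_mul, Matrix.mul_sub, Matrix.sub_mul, Matrix.mul_smul, Matrix.smul_mul]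

variable [Fintype ι] [DecidableEq ι]

theorem det_submatrix_mul_mul (P : Matrix m ι R) (M : Matrix ι ι R) (Q : Matrix ι n R)
    (f : ι → m) (g : ι → n) :
    ((P * M * Q).submatrix f g).det =
      (P.submatrix f id).det * M.det * (Q.submatrix id g).det := by
  rw [submatrix_mul _ _ f id g Function.bijective_id,
    submatrix_mul _ _ f id id Function.bijective_id, submatrix_id_id, det_mul, det_mul]

theorem det_map_C (M : Matrix ι ι R) : (M.map Polynomial.C).det = Polynomial.C M.det :=
  (Polynomial.C.map_det M).symm

end Matrix

theorem minors_of_pencil_general {m n r : ℕ}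
    (U : Matrix (Fin m) (Fin r) K) (V : Matrix (Fin n) (Fin r) K)
    (A' B' : Matrix (Fin r) (Fin r) K)
    (A B : Matrix (Fin m) (Fin n) K)
    (hA : A = U * A' * Vᵀ) (hB : B = U * B' * Vᵀ)
    (f : Fin r → Fin m) (g : Fin r → Fin n) :
    ∃ c : K,
      ((A.map (Polynomial.C) - (Polynomial.X : K[X]) • B.map (Polynomial.C)).submatrix f g).det =
      Polynomial.C c *
        (A'.map (Polynomial.C) - (Polynomial.X : K[X]) • B'.map (Polynomial.C)).det := by
  subst hA hB
  refine ⟨(U.submatrix f id).det * (Vᵀ.submatrix id g).det, ?_⟩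
  rw [pencil_mul_mul, det_submatrix_mul_mul, submatrix_map, submatrix_map, det_map_C,
    det_map_C, map_mul]
  ring

theorem minors_of_pencil {m n r : ℕ} (hr : r ≤ min m n)
    (U : Matrix (Fin m) (Fin r) K) (V : Matrix (Fin n) (Fin r) K)
    (A' B' : Matrix (Fin r) (Fin r) K)
    (A B : Matrix (Fin m) (Fin n) K)
    (hA : A = U * A' * Vᵀ) (hB : B = U * B' * Vᵀ)
    (f : Fin r → Fin m) (g : Fin r → Fin n) :
    ∃ c : K,
      ((A.map (Polynomial.C) - (Polynomial.X : K[X]) • B.map (Polynomial.C)).submatrix f g).det =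
      Polynomial.C c *
        (A'.map (Polynomial.C) - (Polynomial.X : K[X]) • B'.map (Polynomial.C)).det :=
  minors_of_pencil_general U V A' B' A B hA hB f g
end

section
/- Let A = UA'Vᵀ, B = UB'Vᵀ with U ∈ K^{m×r}, V ∈ K^{n×r}, A',B' ∈ K^{r×r}, all of rank r, and r ≤ min(m,n). Let M_a be any r×r submatrix of A of rank r and M_b the matching submatrix of B (same rows and columns). Then λ ∈ K is a nontrivial generalized eigenvalue of the pair (A,B) — i.e., there exists v with Av = λBv and Bv ≠ 0 — if and only if det(M_a − λM_b) = 0. -/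
/-!
Since `U` is injective and `Vᵀ` surjective, `λ` is a nontrivial eigenvalue of `(A, B)` exactly
when it is one of `(A', B')`, and as `B'` is invertible this means `det (A' - λ B') = 0`. The
submatrices factor as `M_a = U_f A' V_g` and `M_b = U_f B' V_g` with square `U_f`, `V_g`, which are
invertible because `M_a` is; hence `det (M_a - λ M_b) = det U_f · det (A' - λ B') · det V_g`.
-/

open Matrix BigOperators Polynomial

variable {K : Type*} [Field K]

open Function

namespace Matrix

variable {R : Type*} {l m n o p q : Type*}

def IsNontrivialEigenvalue [Fintype n] (A B : Matrix m n K) (lam : K) : Prop :=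
  ∃ x : n → K, A *ᵥ x = lam • B *ᵥ x ∧ B *ᵥ x ≠ 0

theorem mulVec_injective_of_rank_eq_card [Fintype n] {M : Matrix m n K}
    (h : M.rank = Fintype.card n) : Injective M.mulVec :=
  mulVec_injective_iff.mpr <| linearIndependent_iff_card_eq_finrank_span.mpr <|
    h.symm.trans M.rank_eq_finrank_span_cols

theorem mulVec_surjective_of_rank_eq_card [Fintype m] [Fintype n] {M : Matrix m n K}
    (h : M.rank = Fintype.card m) : Surjective M.mulVec :=
  LinearMap.range_eq_top.mp <| Submodule.eq_top_of_finrank_eq <|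
    h.trans (Module.finrank_pi K).symm

theorem det_ne_zero_of_rank_eq_card [Fintype n] [DecidableEq n] {M : Matrix n n K}
    (h : M.rank = Fintype.card n) : M.det ≠ 0 :=
  (isUnit_iff_isUnit_det M).mp (mulVec_injective_iff_isUnit.mp
    (mulVec_injective_of_rank_eq_card h)) |>.ne_zero

theorem submatrix_mul_mul [NonUnitalNonAssocSemiring R] [Fintype n] [Fintype o]
    (U : Matrix m n R) (C : Matrix n o R) (W : Matrix o p R) (f : l → m) (g : q → p) :
    (U * C * W).submatrix f g = U.submatrix f id * C * W.submatrix id g := by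
  rw [submatrix_mul _ _ f id g bijective_id, submatrix_mul _ _ f id id bijective_id,
    submatrix_id_id]

theorem det_mul_mul_eq_zero_iff [CommRing R] [NoZeroDivisors R] [Fintype n] [DecidableEq n]
    {P C Q : Matrix n n R} (hP : P.det ≠ 0) (hQ : Q.det ≠ 0) :
    (P * C * Q).det = 0 ↔ C.det = 0 := by
  simp [det_mul, hP, hQ]

theorem isNontrivialEigenvalue_mul_mul_iff [Fintype m] [Fintype n] [Fintype o]
    {U : Matrix l m K} {W : Matrix o n K} (hU : Injective U.mulVec) (hW : Surjective W.mulVec)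
    (A' B' : Matrix m o K) (lam : K) :
    IsNontrivialEigenvalue (U * A' * W) (U * B' * W) lam ↔ IsNontrivialEigenvalue A' B' lam := by
  simp only [IsNontrivialEigenvalue, ← mulVec_mulVec, ← mulVec_smul U, hU.eq_iff,
    hU.ne_iff' (mulVec_zero U)]
  exact (hW.exists (p := fun y => A' *ᵥ y = lam • B' *ᵥ y ∧ B' *ᵥ y ≠ 0)).symm

theorem isNontrivialEigenvalue_iff_det_eq_zero [Fintype n] [DecidableEq n] {A B : Matrix n n K}
    (hB : Injective B.mulVec) (lam : K) :
    IsNontrivialEigenvalue A B lam ↔ (A - lam • B).det = 0 := by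
  simp only [IsNontrivialEigenvalue, ← exists_mulVec_eq_zero_iff, sub_mulVec, smul_mulVec,
    sub_eq_zero, hB.ne_iff' (mulVec_zero B)]
  exact exists_congr fun _ => and_comm

end Matrix

theorem nontrivial_eigenvalues_of_pencil_general {m n r : ℕ}
    (U : Matrix (Fin m) (Fin r) K) (V : Matrix (Fin n) (Fin r) K)
    (A' B' : Matrix (Fin r) (Fin r) K)
    (hU : U.rank = r) (hV : V.rank = r) (hB' : B'.rank = r)
    (A B : Matrix (Fin m) (Fin n) K)
    (hA : A = U * A' * Vᵀ) (hB : B = U * B' * Vᵀ)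
    (f : Fin r → Fin m) (g : Fin r → Fin n)
    (hsub : (A.submatrix f g).rank = r) :
    ∀ lam : K,
      (∃ x : Fin n → K, A.mulVec x = lam • B.mulVec x ∧ B.mulVec x ≠ 0) ↔
      (A.submatrix f g - lam • B.submatrix f g).det = 0 := by
  intro lam
  have hcard : r = Fintype.card (Fin r) := (Fintype.card_fin r).symm
  have hdet : (U.submatrix f id * A' * Vᵀ.submatrix id g).det ≠ 0 := by
    rw [← submatrix_mul_mul, ← hA]
    exact det_ne_zero_of_rank_eq_card (hsub.trans hcard)
  rw [det_mul, det_mul] at hdet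
  have hpencil : A.submatrix f g - lam • B.submatrix f g =
      U.submatrix f id * (A' - lam • B') * Vᵀ.submatrix id g := by
    rw [hA, hB, submatrix_mul_mul, submatrix_mul_mul, mul_sub, sub_mul, Matrix.mul_smul,
      Matrix.smul_mul]
  change IsNontrivialEigenvalue A B lam ↔ _
  rw [hpencil, det_mul_mul_eq_zero_iff (left_ne_zero_of_mul (left_ne_zero_of_mul hdet))
      (right_ne_zero_of_mul hdet), hA, hB,
    isNontrivialEigenvalue_mul_mul_iff (mulVec_injective_of_rank_eq_card (hU.trans hcard))
      (mulVec_surjective_of_rank_eq_card ((rank_transpose V).trans (hV.trans hcard))),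
    isNontrivialEigenvalue_iff_det_eq_zero (mulVec_injective_of_rank_eq_card (hB'.trans hcard))]

theorem nontrivial_eigenvalues_of_pencil {m n r : ℕ} (hr : r ≤ min m n)
    (U : Matrix (Fin m) (Fin r) K) (V : Matrix (Fin n) (Fin r) K)
    (A' B' : Matrix (Fin r) (Fin r) K)
    (hU : U.rank = r) (hV : V.rank = r) (hA' : A'.rank = r) (hB' : B'.rank = r)
    (A B : Matrix (Fin m) (Fin n) K)
    (hA : A = U * A' * Vᵀ) (hB : B = U * B' * Vᵀ)
    (f : Fin r → Fin m) (g : Fin r → Fin n)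
    (hsub : (A.submatrix f g).rank = r) :
    ∀ lam : K,
      (∃ x : Fin n → K, A.mulVec x = lam • B.mulVec x ∧ B.mulVec x ≠ 0) ↔
      (A.submatrix f g - lam • B.submatrix f g).det = 0 :=
  nontrivial_eigenvalues_of_pencil_general U V A' B' hU hV hB' A B hA hB f g hsub
end

section
/- Let M₁,…,M_p be a basis of a subspace V ⊆ K^{m×n}, ordered with nondecreasing ranks, and suppose the subspaces Im(M₁),…,Im(M_p) are in direct sum. Then for every i ≥ 1, the minimum of rank(M) over all M ∈ V \ span(M₁,…,M_{i−1}) equals rank(M_i). -/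
open Matrix BigOperators Polynomial

variable {K : Type*} [Field K]

/-! Write `N = ∑ c j • M j`; as `N` avoids the span of the `M j` with `j < i`, some `c ℓ` with
`ℓ ≥ i` is nonzero. Then the column space of `M ℓ` lies in the column space of `N` plus the sum
`S` of the other column spaces, and meets `S` trivially, so `rank (M i) ≤ rank (M ℓ) ≤ rank N`. -/

theorem Submodule.sum_smul_mem_span_image {ι W : Type*} [Fintype ι] [AddCommGroup W]
    [Module K W] (v : ι → W) (s : Set ι) (c : ι → K) (hc : ∀ j ∉ s, c j = 0) :
    ∑ j, c j • v j ∈ Submodule.span K (v '' s) := by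
  refine Submodule.sum_mem _ fun j _ => ?_
  by_cases hj : j ∈ s
  · exact Submodule.smul_mem _ _ (Submodule.subset_span ⟨j, hj, rfl⟩)
  · rw [hc j hj, zero_smul]
    exact Submodule.zero_mem _

theorem DirectSumFamily.iSupIndep {q : ℕ} {W : Type*} [AddCommGroup W] [Module K W]
    {E : Fin q → Submodule K W} (hE : DirectSumFamily E) : iSupIndep E := by
  classical
  rw [iSupIndep_iff_finsetSum_eq_zero_imp_eq_zero]
  intro s v hv hv0 i hi
  have hvi := hE (fun j => if j ∈ s then v j else 0)
    (fun j => by split_ifs with hj <;> simp [hv, hj])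
    (by rwa [Finset.sum_ite_mem, Finset.univ_inter]) i
  simpa [hi] using hvi

theorem Submodule.finrank_le_of_le_sup_of_disjoint {F : Type*} [AddCommGroup F] [Module K F]
    [FiniteDimensional K F] {A B S : Submodule K F} (hAS : Disjoint A S) (hA : A ≤ B ⊔ S) :
    Module.finrank K A ≤ Module.finrank K B := by
  have h := Submodule.finrank_sup_add_finrank_inf_eq A S
  rw [hAS.eq_bot, finrank_bot, add_zero] at h
  have := Submodule.finrank_mono (sup_le hA le_sup_right : A ⊔ S ≤ B ⊔ S)
  have := Submodule.finrank_add_le_finrank_add_finrank B S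
  omega

theorem LinearMap.finrank_range_le_finrank_range_sum_smul {ι E F : Type*} [Fintype ι]
    [AddCommGroup E] [Module K E] [AddCommGroup F] [Module K F] [FiniteDimensional K F]
    {g : ι → E →ₗ[K] F} (hg : iSupIndep fun j => LinearMap.range (g j)) (c : ι → K) {ℓ : ι}
    (hc : c ℓ ≠ 0) :
    Module.finrank K (LinearMap.range (g ℓ)) ≤
      Module.finrank K (LinearMap.range (∑ j, c j • g j)) := by
  classical
  refine Submodule.finrank_le_of_le_sup_of_disjoint (hg ℓ) ?_
  rintro _ ⟨x, rfl⟩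
  set y := (c ℓ)⁻¹ • x
  have hrest : ∑ j ∈ Finset.univ.erase ℓ, (c j • g j) y ∈
      ⨆ j, ⨆ (_ : j ≠ ℓ), LinearMap.range (g j) :=
    Submodule.sum_mem _ fun j hj => Submodule.mem_iSup_of_mem j <|
      Submodule.mem_iSup_of_mem (Finset.ne_of_mem_erase hj) <| Submodule.smul_mem _ _ ⟨y, rfl⟩
  refine Submodule.mem_sup.2 ⟨_, ⟨y, rfl⟩, _, Submodule.neg_mem _ hrest, ?_⟩
  rw [LinearMap.sum_apply, ← Finset.add_sum_erase _ _ (Finset.mem_univ ℓ),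
    add_neg_cancel_right, LinearMap.smul_apply, map_smul, smul_inv_smul₀ hc]

theorem Matrix.rank_le_rank_sum_smul {ι : Type*} [Fintype ι] {m n : ℕ}
    {M : ι → Matrix (Fin m) (Fin n) K} (hM : iSupIndep fun j => colSpace (M j)) (c : ι → K)
    {ℓ : ι} (hc : c ℓ ≠ 0) : (M ℓ).rank ≤ (∑ j, c j • M j).rank := by
  have hlin : (∑ j, c j • M j).mulVecLin = ∑ j, c j • (M j).mulVecLin := by
    simp only [← Matrix.toLin'_apply', map_sum, map_smul]
  rw [Matrix.rank, Matrix.rank, hlin]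
  exact LinearMap.finrank_range_le_finrank_range_sum_smul hM c hc

theorem minrank_of_basis {m n p : ℕ}
    (V : Submodule K (Matrix (Fin m) (Fin n) K))
    (M : Fin p → Matrix (Fin m) (Fin n) K)
    (hbasis : LinearIndependent K M) (hspan : V = Submodule.span K (Set.range M))
    (hmono : ∀ i j : Fin p, i ≤ j → (M i).rank ≤ (M j).rank)
    (hcol : DirectSumFamily (fun ℓ => colSpace (M ℓ))) :
    ∀ i : Fin p,
      IsLeast {s : ℕ | ∃ N, N ∈ V ∧
        N ∉ Submodule.span K (M '' {j : Fin p | j < i}) ∧ N.rank = s} ((M i).rank) := by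
  intro i
  subst hspan
  refine ⟨⟨M i, Submodule.subset_span ⟨i, rfl⟩, hbasis.notMem_span_image (by simp), rfl⟩, ?_⟩
  rintro _ ⟨N, hNV, hN, rfl⟩
  obtain ⟨c, rfl⟩ := (Submodule.mem_span_range_iff_exists_fun K).1 hNV
  obtain ⟨ℓ, hiℓ, hcℓ⟩ : ∃ ℓ, i ≤ ℓ ∧ c ℓ ≠ 0 := by
    by_contra! h
    exact hN (Submodule.sum_smul_mem_span_image M _ c fun j hj => h j (not_lt.1 hj))
  exact (hmono i ℓ hiℓ).trans (Matrix.rank_le_rank_sum_smul hcol.iSupIndep c hcℓ)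
end
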